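/- arXiv:2310.13616 — 8 statements merged into one kernel-verified Lean document; each statement's English description precedes it below -/
import Mathlib

section
/- Let 𝒢 be a periodic graph with footprint G and let h : G → H be a retraction of G onto a subgraph H. If, for every time t, the restriction of h is also a retraction of each snapshot G_t onto h(G_t), then c(𝒢[H]) ≤ c(𝒢), where 𝒢[H] is the induced periodic subgraph on V(H). -/
/-- The closed neighbourhood of `u` in `G` (contains `u` itself, modelling
reflexive graphs / the option of standing still). -/
def cN {V : Type*} (G : SimpleGraph V) (u : V) : Set V := insert u {v | G.Adj u v}

/-- A periodic temporal graph: a `p`-periodic sequence of snapshots on a common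
vertex set `V`. -/
structure PeriodicGraph (V : Type*) where
  p : ℕ
  p_pos : 0 < p
  snap : ℕ → SimpleGraph V
  periodic : ∀ t, snap (t + p) = snap t

namespace PeriodicGraph

variable {V : Type*}

/-- A strategy for `k` cops: initial positions and a move function
(depending on the round, current cop positions and robber position). -/
structure CopStrategy (𝒢 : PeriodicGraph V) (k : ℕ) where
  init : Fin k → V
  move : ℕ → (Fin k → V) → V → (Fin k → V)

/-- A strategy for the robber: an initial position (chosen after seeing the
cops' initial positions) and a move function (depending on the round, the
cops' positions after their move, and the robber's position). -/
structure RobStrategy (𝒢 : PeriodicGraph V) (k : ℕ) where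
  init : (Fin k → V) → V
  move : ℕ → (Fin k → V) → V → V

/-- A cop strategy is legal if every move stays in the closed neighbourhood
of the current position in the current snapshot. -/
def CopStrategy.Legal {𝒢 : PeriodicGraph V} {k : ℕ} (σ : CopStrategy 𝒢 k) : Prop :=
  ∀ t c r i, σ.move t c r i ∈ cN (𝒢.snap t) (c i)

/-- A robber strategy is legal if every move stays in the closed neighbourhood
of the current position in the current snapshot. -/
def RobStrategy.Legal {𝒢 : PeriodicGraph V} {k : ℕ} (ρ : RobStrategy 𝒢 k) : Prop :=
  ∀ t c r, ρ.move t c r ∈ cN (𝒢.snap t) r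

/-- The positions (cops, robber) at the start of round `t` of the play
determined by the two strategies.  In round `t` the cops move first, then the
robber, both along the snapshot `𝒢.snap t`. -/
def play {𝒢 : PeriodicGraph V} {k : ℕ} (σ : CopStrategy 𝒢 k) (ρ : RobStrategy 𝒢 k) :
    ℕ → (Fin k → V) × V
  | 0 => (σ.init, ρ.init σ.init)
  | t + 1 =>
    (σ.move t (play σ ρ t).1 (play σ ρ t).2,
     ρ.move t (σ.move t (play σ ρ t).1 (play σ ρ t).2) (play σ ρ t).2)

/-- The robber is captured: at some point a cop occupies the robber's vertex,
either at the start of a round or right after the cops' move in a round. -/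
def Captured {𝒢 : PeriodicGraph V} {k : ℕ} (σ : CopStrategy 𝒢 k) (ρ : RobStrategy 𝒢 k) :
    Prop :=
  ∃ t i, (play σ ρ t).1 i = (play σ ρ t).2 ∨ (play σ ρ (t + 1)).1 i = (play σ ρ t).2

/-- `k` cops have a winning strategy on `𝒢`. -/
def CopsWin (𝒢 : PeriodicGraph V) (k : ℕ) : Prop :=
  ∃ σ : CopStrategy 𝒢 k, σ.Legal ∧ ∀ ρ : RobStrategy 𝒢 k, ρ.Legal → Captured σ ρ

/-- The cop number of a periodic graph: the least `k` such that `k` cops win. -/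
noncomputable def copNumber (𝒢 : PeriodicGraph V) : ℕ := sInf {k | 𝒢.CopsWin k}

/-- The footprint of a periodic graph: the union of all snapshots. -/
def footprint (𝒢 : PeriodicGraph V) : SimpleGraph V := ⨆ t, 𝒢.snap t

/-- The induced periodic subgraph on a set `S` of vertices. -/
def restrict (𝒢 : PeriodicGraph V) (S : Set V) : PeriodicGraph S where
  p := 𝒢.p
  p_pos := 𝒢.p_pos
  snap t := SimpleGraph.induce S (𝒢.snap t)
  periodic t := congrArg (SimpleGraph.induce S) (𝒢.periodic t)

/-- A static graph, seen as a periodic graph of period 1. -/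
def ofStatic (G : SimpleGraph V) : PeriodicGraph V :=
  ⟨1, Nat.one_pos, fun _ => G, fun _ => rfl⟩

end PeriodicGraph

/-- The cop number of a static (reflexive) graph. -/
noncomputable def copNumberS {V : Type*} (G : SimpleGraph V) : ℕ :=
  (PeriodicGraph.ofStatic G).copNumber

section Aux

open scoped Classical

variable {W : Type*}

/-- `AWin PP k n t d r` : from the position (cops at `d`, robber at `r`) at the
start of round `t`, `k` cops can force a capture within `n` rounds. -/
def AWin (PP : PeriodicGraph W) (k : ℕ) : ℕ → ℕ → (Fin k → W) → W → Prop
  | 0, _, d, r => ∃ i, d i = r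
  | n+1, t, d, r => AWin PP k n t d r ∨
      ∃ d' : Fin k → W, (∀ i, d' i ∈ cN (PP.snap t) (d i)) ∧
        ((∃ i, d' i = r) ∨ ∀ r' ∈ cN (PP.snap t) r, AWin PP k n (t+1) d' r')

theorem AWin.mono {PP : PeriodicGraph W} {k n m t d r}
    (hw : AWin PP k n t d r) (hnm : n ≤ m) : AWin PP k m t d r := by
  induction hnm with
  | refl => exact hw
  | step _ ih => exact Or.inl ih

theorem goodMove {PP : PeriodicGraph W} {k : ℕ} {t : ℕ} {d : Fin k → W} {r : W}
    (hx : (∃ n, AWin PP k n t d r) ∧ ¬ (∃ i, d i = r)) :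
    ∃ d' : Fin k → W, (∀ i, d' i ∈ cN (PP.snap t) (d i)) ∧
      ((∃ i, d' i = r) ∨
        ∀ r' ∈ cN (PP.snap t) r, AWin PP k (Nat.find hx.1 - 1) (t+1) d' r') := by
  have hspec := Nat.find_spec hx.1
  rcases hn : Nat.find hx.1 with _ | m
  · rw [hn] at hspec; exact absurd hspec hx.2
  · rw [hn] at hspec
    rcases hspec with hw | ⟨d', hleg, hcap⟩
    · exact absurd hw (Nat.find_min hx.1 (by omega))
    · refine ⟨d', hleg, ?_⟩
      simpa using hcap

/-- The cop strategy extracted from the attractor. -/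
noncomputable def copMove (PP : PeriodicGraph W) (k : ℕ) :
    ℕ → (Fin k → W) → W → (Fin k → W) :=
  fun t d r =>
    if hx : (∃ n, AWin PP k n t d r) ∧ ¬ (∃ i, d i = r) then
      Classical.choose (goodMove hx)
    else d

theorem copsWin_of_AWin {PP : PeriodicGraph W} {k : ℕ}
    (hd : ∃ d0, ∀ r0, ∃ n, AWin PP k n 0 d0 r0) : PP.CopsWin k := by
  obtain ⟨d0, hd0⟩ := hd
  set σ : PeriodicGraph.CopStrategy PP k := ⟨d0, copMove PP k⟩ with hσ
  refine ⟨σ, ?_, ?_⟩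
  · intro t c r i
    show copMove PP k t c r i ∈ _
    unfold copMove
    split_ifs with hx
    · exact (Classical.choose_spec (goodMove hx)).1 i
    · exact Set.mem_insert _ _
  · intro ρ hρ
    suffices hmain : ∀ n t,
        AWin PP k n t (PeriodicGraph.play σ ρ t).1 (PeriodicGraph.play σ ρ t).2 →
        PeriodicGraph.Captured σ ρ by
      obtain ⟨n, hn⟩ := hd0 (ρ.init d0)
      exact hmain n 0 hn
    intro n
    induction n using Nat.strong_induction_on with
    | _ n ih =>
      intro t hw
      by_cases hcap : ∃ i, (PeriodicGraph.play σ ρ t).1 i = (PeriodicGraph.play σ ρ t).2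
      · obtain ⟨i, hi⟩ := hcap
        exact ⟨t, i, Or.inl hi⟩
      · have hx : (∃ m, AWin PP k m t (PeriodicGraph.play σ ρ t).1
            (PeriodicGraph.play σ ρ t).2) ∧
            ¬ (∃ i, (PeriodicGraph.play σ ρ t).1 i = (PeriodicGraph.play σ ρ t).2) :=
          ⟨⟨n, hw⟩, hcap⟩
        have hmove : (PeriodicGraph.play σ ρ (t+1)).1 = Classical.choose (goodMove hx) := by
          show copMove PP k t _ _ = _
          unfold copMove
          rw [dif_pos hx]
        have hspec := Classical.choose_spec (goodMove hx)
        rcases hspec.2 with hcap' | hall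
        · obtain ⟨i, hi⟩ := hcap'
          exact ⟨t, i, Or.inr (by rw [hmove]; exact hi)⟩
        · have hrleg : (PeriodicGraph.play σ ρ (t+1)).2 ∈
              cN (PP.snap t) (PeriodicGraph.play σ ρ t).2 :=
            hρ t (PeriodicGraph.play σ ρ (t+1)).1 (PeriodicGraph.play σ ρ t).2
          have hw' : AWin PP k (Nat.find hx.1 - 1) (t+1)
              (PeriodicGraph.play σ ρ (t+1)).1 (PeriodicGraph.play σ ρ (t+1)).2 := by
            rw [hmove]
            exact hall _ hrleg
          have hfind_le : Nat.find hx.1 ≤ n := Nat.find_le hw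
          have hfind_ne : Nat.find hx.1 ≠ 0 := by
            intro h0
            have := Nat.find_spec hx.1
            rw [h0] at this
            exact hcap this
          exact ih _ (by omega) (t+1) hw'

theorem trap_step [Finite W] {PP : PeriodicGraph W} {k : ℕ} {t : ℕ}
    {d d' : Fin k → W} {r : W}
    (hnw : ∀ n, ¬ AWin PP k n t d r) (hd' : ∀ i, d' i ∈ cN (PP.snap t) (d i)) :
    (∀ i, d' i ≠ r) ∧ ∃ r' ∈ cN (PP.snap t) r, ∀ n, ¬ AWin PP k n (t+1) d' r' := by
  constructor
  · intro i hi
    exact hnw 1 (Or.inr ⟨d', hd', Or.inl ⟨i, hi⟩⟩)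
  · by_contra hcon
    push_neg at hcon
    haveI := Fintype.ofFinite W
    set g : W → ℕ := fun r' =>
      if hx : ∃ n, AWin PP k n (t+1) d' r' then Nat.find hx else 0 with hg
    have key : ∀ r' ∈ cN (PP.snap t) r, AWin PP k (Finset.univ.sup g) (t+1) d' r' := by
      intro r' hr'
      obtain ⟨n, hn⟩ := hcon r' hr'
      have hx : ∃ n, AWin PP k n (t+1) d' r' := ⟨n, hn⟩
      have h1 : AWin PP k (g r') (t+1) d' r' := by
        rw [hg]; simp only [dif_pos hx]; exact Nat.find_spec hx
      exact h1.mono (Finset.le_sup (Finset.mem_univ r'))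
    exact hnw (Finset.univ.sup g + 1) (Or.inr ⟨d', hd', Or.inr key⟩)

theorem copsWin_card {V : Type*} [Fintype V] (𝒢 : PeriodicGraph V) :
    𝒢.CopsWin (Fintype.card V) := by
  refine ⟨⟨(Fintype.equivFin V).symm, fun _ c _ => c⟩, fun t c r i => Set.mem_insert _ _, ?_⟩
  intro ρ _
  refine ⟨0, (Fintype.equivFin V) (ρ.init (Fintype.equivFin V).symm), Or.inl ?_⟩
  exact (Fintype.equivFin V).symm_apply_apply _

/-- The evading robber's move function, pulled back from the restricted graph. -/
noncomputable def robMove {V W : Type*} (𝒢 : PeriodicGraph V) (PP : PeriodicGraph W)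
    (k : ℕ) (f : V → W) (g : W → V) : ℕ → (Fin k → V) → V → V :=
  fun t c r =>
    if hx : ∃ r' : W, g r' ∈ cN (𝒢.snap t) r ∧ ∀ n, ¬ AWin PP k n (t+1) (f ∘ c) r' then
      g hx.choose
    else r

/-- The evading robber strategy, pulled back from the restricted graph. -/
noncomputable def robStrat {V W : Type*} (𝒢 : PeriodicGraph V) (PP : PeriodicGraph W)
    (k : ℕ) (f : V → W) (g : W → V)
    (hcon : ∀ d0 : Fin k → W, ∃ r0, ∀ n, ¬ AWin PP k n 0 d0 r0) :
    PeriodicGraph.RobStrategy 𝒢 k where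
  init c := g (hcon (f ∘ c)).choose
  move := robMove 𝒢 PP k f g

theorem copsWin_pull {V W : Type*} [Finite W] (𝒢 : PeriodicGraph V) (PP : PeriodicGraph W)
    (k : ℕ) (f : V → W) (g : W → V)
    (hfg : ∀ w, f (g w) = w)
    (hf : ∀ t x y, y ∈ cN (𝒢.snap t) x → f y ∈ cN (PP.snap t) (f x))
    (hg : ∀ t a b, b ∈ cN (PP.snap t) a → g b ∈ cN (𝒢.snap t) (g a))
    (hwin : 𝒢.CopsWin k) : PP.CopsWin k := by
  obtain ⟨σ, hσleg, hσwin⟩ := hwin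
  apply copsWin_of_AWin
  by_contra hcon
  push_neg at hcon
  set ρ : PeriodicGraph.RobStrategy 𝒢 k := robStrat 𝒢 PP k f g hcon with hρdef
  have hρleg : ρ.Legal := by
    intro t c r
    show robMove 𝒢 PP k f g t c r ∈ _
    unfold robMove
    split_ifs with hx
    · exact hx.choose_spec.1
    · exact Set.mem_insert _ _
  have hinv : ∀ t : ℕ, ∃ rs : W, g rs = (PeriodicGraph.play σ ρ t).2 ∧
      ∀ n, ¬ AWin PP k n t (f ∘ (PeriodicGraph.play σ ρ t).1) rs := by
    intro t
    induction t with
    | zero =>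
      exact ⟨(hcon (f ∘ σ.init)).choose, rfl, (hcon (f ∘ σ.init)).choose_spec⟩
    | succ t iht =>
      obtain ⟨rs, hrs, hnw⟩ := iht
      have hshleg : ∀ i,
          (f ∘ (σ.move t (PeriodicGraph.play σ ρ t).1 (PeriodicGraph.play σ ρ t).2)) i ∈
            cN (PP.snap t) ((f ∘ (PeriodicGraph.play σ ρ t).1) i) :=
        fun i => hf t _ _ (hσleg t _ _ i)
      obtain ⟨-, r', hr'leg, hnw'⟩ := trap_step hnw hshleg
      have hx : ∃ r'' : W, g r'' ∈ cN (𝒢.snap t) (PeriodicGraph.play σ ρ t).2 ∧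
          ∀ n, ¬ AWin PP k n (t+1)
            (f ∘ (σ.move t (PeriodicGraph.play σ ρ t).1 (PeriodicGraph.play σ ρ t).2)) r'' :=
        ⟨r', by rw [← hrs]; exact hg t rs r' hr'leg, hnw'⟩
      refine ⟨hx.choose, ?_, hx.choose_spec.2⟩
      have hplay : (PeriodicGraph.play σ ρ (t+1)).2 =
          robMove 𝒢 PP k f g t
            (σ.move t (PeriodicGraph.play σ ρ t).1 (PeriodicGraph.play σ ρ t).2)
            (PeriodicGraph.play σ ρ t).2 := rfl
      rw [hplay]
      unfold robMove
      rw [dif_pos hx]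
  obtain ⟨t, i, hc⟩ := hσwin ρ hρleg
  obtain ⟨rs, hrs, hnw⟩ := hinv t
  rcases hc with h1 | h2
  · refine hnw 0 ⟨i, ?_⟩
    show f ((PeriodicGraph.play σ ρ t).1 i) = rs
    rw [h1, ← hrs, hfg]
  · have hshleg : ∀ i,
        (f ∘ (σ.move t (PeriodicGraph.play σ ρ t).1 (PeriodicGraph.play σ ρ t).2)) i ∈
          cN (PP.snap t) ((f ∘ (PeriodicGraph.play σ ρ t).1) i) :=
      fun i => hf t _ _ (hσleg t _ _ i)
    apply (trap_step hnw hshleg).1 i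
    show f ((σ.move t (PeriodicGraph.play σ ρ t).1 (PeriodicGraph.play σ ρ t).2) i) = rs
    have h2' : (σ.move t (PeriodicGraph.play σ ρ t).1 (PeriodicGraph.play σ ρ t).2) i =
        (PeriodicGraph.play σ ρ t).2 := h2
    rw [h2', ← hrs, hfg]

end Aux

/-- If `h` is a retraction of the footprint that is simultaneously a
retraction of every snapshot (as reflexive graphs), then the cop number of the
induced periodic subgraph on the image of `h` is at most that of `𝒢`. -/
theorem copNumber_restrict_retract_le {V : Type*} [Fintype V] (𝒢 : PeriodicGraph V)
    (h : V → V)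
    (hidem : ∀ x, h (h x) = h x)
    (hhom : ∀ t x y, (𝒢.snap t).Adj x y → h x = h y ∨ (𝒢.snap t).Adj (h x) (h y)) :
    (𝒢.restrict (Set.range h)).copNumber ≤ 𝒢.copNumber := by
  classical
  have hfix : ∀ v : V, v ∈ Set.range h → h v = v := by
    rintro v ⟨x, rfl⟩
    exact hidem x
  have key : ∀ k : ℕ, 𝒢.CopsWin k → (𝒢.restrict (Set.range h)).CopsWin k := by
    intro k hw
    refine copsWin_pull 𝒢 (𝒢.restrict (Set.range h)) k
      (fun v => ⟨h v, v, rfl⟩) Subtype.val ?_ ?_ ?_ hw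
    · rintro ⟨v, hv⟩
      exact Subtype.ext (hfix v hv)
    · intro t x y hy
      show (⟨h y, y, rfl⟩ : Set.range h) ∈ cN ((𝒢.restrict (Set.range h)).snap t) ⟨h x, x, rfl⟩
      rcases Set.mem_insert_iff.1 hy with rfl | hadj
      · exact Set.mem_insert _ _
      · rcases hhom t x y hadj with heq | hadj'
        · have : (⟨h y, y, rfl⟩ : Set.range h) = ⟨h x, x, rfl⟩ := Subtype.ext heq.symm
          rw [this]
          exact Set.mem_insert _ _
        · refine Set.mem_insert_iff.2 (Or.inr ?_)
          show ((𝒢.restrict (Set.range h)).snap t).Adj _ _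
          exact hadj'
    · intro t a b hb
      rcases Set.mem_insert_iff.1 hb with rfl | hadj
      · exact Set.mem_insert _ _
      · exact Set.mem_insert_iff.2 (Or.inr hadj)
  have hA : ({k | 𝒢.CopsWin k}).Nonempty := ⟨Fintype.card V, copsWin_card 𝒢⟩
  have hmem : sInf {k | 𝒢.CopsWin k} ∈ {k | 𝒢.CopsWin k} := Nat.sInf_mem hA
  exact Nat.sInf_le (key _ hmem)
end

section
/- There exists a periodic graph 𝒢 with footprint G and a retract H of G such that c(𝒢[H]) > c(𝒢). Concretely: let G have vertices {a,b,c,d,u}, with 4-cycle (a,b,c,d) and triangle (b,u,c); then H = the 4-cycle (a,b,c,d) is a retract of G, and there is a periodic graph 𝒢 on G with c(𝒢) = 1 but c(𝒢[H]) = 2. -/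
/-- The footprint for the retract counterexample: vertices `a b c d u = 0 1 2 3 4`,
a 4-cycle `(a,b,c,d)` and a triangle `(b,u,c)`. -/
def cntG : SimpleGraph (Fin 5) :=
  SimpleGraph.fromRel (fun x y =>
    ((x, y) ∈ ([(0, 1), (1, 2), (2, 3), (3, 0), (1, 4), (2, 4)] : List (Fin 5 × Fin 5))))

/- ------------------------------------------------------------------ -/
/- Auxiliary development for the counterexample                        -/
/- ------------------------------------------------------------------ -/

namespace CntEx

open PeriodicGraph

/-- The 4-cycle vertex set. -/
abbrev SS : Set (Fin 5) := ({0, 1, 2, 3} : Set (Fin 5))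

/-- Snapshot at even times: only the triangle edges `1-4`, `2-4`. -/
def g0 : SimpleGraph (Fin 5) :=
  SimpleGraph.fromRel (fun x y => (x, y) ∈ ([(1, 4), (2, 4)] : List (Fin 5 × Fin 5)))

/-- Snapshot at odd times: the 4-cycle. -/
def g1 : SimpleGraph (Fin 5) :=
  SimpleGraph.fromRel (fun x y =>
    (x, y) ∈ ([(0, 1), (1, 2), (2, 3), (3, 0)] : List (Fin 5 × Fin 5)))

instance : DecidableRel g0.Adj := fun a b =>
  decidable_of_iff _ (SimpleGraph.fromRel_adj _ a b).symm

instance : DecidableRel g1.Adj := fun a b =>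
  decidable_of_iff _ (SimpleGraph.fromRel_adj _ a b).symm

instance : DecidableRel cntG.Adj := fun a b =>
  decidable_of_iff _ (SimpleGraph.fromRel_adj _ a b).symm

/-- The snapshot function. -/
def snapF (t : ℕ) : SimpleGraph (Fin 5) := if t % 2 = 0 then g0 else g1

instance (t : ℕ) : DecidableRel (snapF t).Adj := fun a b => by
  unfold snapF; split <;> infer_instance

/-- The counterexample periodic graph. -/
def GG : PeriodicGraph (Fin 5) where
  p := 2
  p_pos := by norm_num
  snap := snapF
  periodic := by intro t; unfold snapF; simp [Nat.add_mod_right]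

lemma mem_cN {V : Type*} {G : SimpleGraph V} {u v : V} :
    v ∈ cN G u ↔ v = u ∨ G.Adj u v := by
  simp [cN, Set.mem_insert_iff, Set.mem_setOf_eq]

lemma footprint_GG : GG.footprint = cntG := by
  ext a b
  rw [PeriodicGraph.footprint, SimpleGraph.iSup_adj]
  constructor
  · rintro ⟨t, ht⟩
    have ht' : g0.Adj a b ∨ g1.Adj a b := by
      unfold GG snapF at ht; dsimp at ht; split at ht
      · exact Or.inl ht
      · exact Or.inr ht
    exact (by decide : ∀ x y : Fin 5, g0.Adj x y ∨ g1.Adj x y → cntG.Adj x y) a b ht'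
  · intro h
    rcases (by decide : ∀ x y : Fin 5, cntG.Adj x y → g0.Adj x y ∨ g1.Adj x y) a b h with
      h0 | h1
    · exact ⟨0, h0⟩
    · exact ⟨1, h1⟩

/-- The retraction of `cntG` onto the 4-cycle. -/
def retr : Fin 5 → Fin 5 := fun x => if x = 4 then 1 else x

lemma retr_range : Set.range retr = SS := by
  ext v
  simp only [Set.mem_range, Set.mem_insert_iff, Set.mem_singleton_iff]
  constructor
  · rintro ⟨x, rfl⟩
    exact (by decide : ∀ x : Fin 5, retr x = 0 ∨ retr x = 1 ∨ retr x = 2 ∨ retr x = 3) x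
  · rintro (rfl | rfl | rfl | rfl)
    exacts [⟨0, by decide⟩, ⟨1, by decide⟩, ⟨2, by decide⟩, ⟨3, by decide⟩]

lemma retr_fix : ∀ x ∈ SS, retr x = x := by
  intro x hx
  simp only [Set.mem_insert_iff, Set.mem_singleton_iff] at hx
  rcases hx with rfl | rfl | rfl | rfl <;> decide

lemma retr_hom : ∀ x y, cntG.Adj x y → retr x = retr y ∨ cntG.Adj (retr x) (retr y) := by
  decide

/- ------------------------------------------------------------------ -/
/- One cop wins on `GG`                                                -/
/- ------------------------------------------------------------------ -/

/-- Generic lemma: zero cops never win (the robber can just stand still). -/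
lemma not_copsWin_zero {V : Type*} (𝒢 : PeriodicGraph V) (v : V) : ¬ 𝒢.CopsWin 0 := by
  rintro ⟨σ, -, hwin⟩
  have hleg : (⟨fun _ => v, fun _ _ r => r⟩ : RobStrategy 𝒢 0).Legal := by
    intro t c r; exact Set.mem_insert r _
  obtain ⟨t, i, -⟩ := hwin _ hleg
  exact i.elim0

/-- The winning single-cop strategy on `GG`: start at `4`; catch the robber if
adjacent, otherwise move to `1` (if the robber is at `0`) or to `2` (if the
robber is at `3`). -/
def σ1 : CopStrategy GG 1 where
  init := fun _ => 4
  move := fun t c r i =>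
    if r = c i ∨ (snapF t).Adj (c i) r then r
    else if r = 0 ∧ ((1 : Fin 5) = c i ∨ (snapF t).Adj (c i) 1) then 1
    else if r = 3 ∧ ((2 : Fin 5) = c i ∨ (snapF t).Adj (c i) 2) then 2
    else c i

lemma σ1_legal : σ1.Legal := by
  intro t c r i
  show σ1.move t c r i ∈ cN (snapF t) (c i)
  unfold σ1
  dsimp only
  split
  · next h => exact mem_cN.2 h
  · split
    · next h => exact mem_cN.2 h.2
    · split
      · next h => exact mem_cN.2 h.2
      · exact mem_cN.2 (Or.inl rfl)

lemma copsWin_GG_one : GG.CopsWin 1 := by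
  refine ⟨σ1, σ1_legal, ?_⟩
  intro ρ hρ
  set r0 : Fin 5 := ρ.init σ1.init with hr0def
  have h5 : r0 = 0 ∨ r0 = 1 ∨ r0 = 2 ∨ r0 = 3 ∨ r0 = 4 :=
    (by decide : ∀ x : Fin 5, x = 0 ∨ x = 1 ∨ x = 2 ∨ x = 3 ∨ x = 4) r0
  have e0 : play σ1 ρ 0 = (σ1.init, r0) := rfl
  have e1 : play σ1 ρ 1 =
      (σ1.move 0 σ1.init r0, ρ.move 0 (σ1.move 0 σ1.init r0) r0) := rfl
  -- case analysis on the robber's initial position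
  rcases h5 with hr | hr | hr | hr | hr
  · -- robber at 0: cop goes to 1, robber is stuck at 0, cop catches at round 1
    have hc1 : σ1.move 0 σ1.init r0 = fun _ => 1 := by
      funext i; rw [hr]; fin_cases i; decide
    have hstuck : ρ.move 0 (σ1.move 0 σ1.init r0) r0 = r0 := by
      have hm := hρ 0 (σ1.move 0 σ1.init r0) r0
      rcases mem_cN.1 hm with h | h
      · exact h
      · exfalso
        rw [hr] at h
        exact (by decide : ∀ x : Fin 5, ¬ g0.Adj 0 x) _ h
    refine ⟨1, 0, Or.inr ?_⟩
    have e2 : (play σ1 ρ 2).1 =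
        σ1.move 1 (play σ1 ρ 1).1 (play σ1 ρ 1).2 := rfl
    rw [e2, e1]
    dsimp only
    rw [hstuck, hc1, hr]
    decide
  · exact ⟨0, 0, Or.inr (by rw [e1, e0]; dsimp only; rw [hr]; decide)⟩
  · exact ⟨0, 0, Or.inr (by rw [e1, e0]; dsimp only; rw [hr]; decide)⟩
  · -- robber at 3: cop goes to 2, robber is stuck at 3, cop catches at round 1
    have hc1 : σ1.move 0 σ1.init r0 = fun _ => 2 := by
      funext i; rw [hr]; fin_cases i; decide
    have hstuck : ρ.move 0 (σ1.move 0 σ1.init r0) r0 = r0 := by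
      have hm := hρ 0 (σ1.move 0 σ1.init r0) r0
      rcases mem_cN.1 hm with h | h
      · exact h
      · exfalso
        rw [hr] at h
        exact (by decide : ∀ x : Fin 5, ¬ g0.Adj 3 x) _ h
    refine ⟨1, 0, Or.inr ?_⟩
    have e2 : (play σ1 ρ 2).1 =
        σ1.move 1 (play σ1 ρ 1).1 (play σ1 ρ 1).2 := rfl
    rw [e2, e1]
    dsimp only
    rw [hstuck, hc1, hr]
    decide
  · exact ⟨0, 0, Or.inr (by rw [e1, e0]; dsimp only; rw [hr]; decide)⟩

lemma copNumber_GG : GG.copNumber = 1 := by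
  have h1 : (1 : ℕ) ∈ {k | GG.CopsWin k} := copsWin_GG_one
  have hne : {k | GG.CopsWin k}.Nonempty := ⟨1, h1⟩
  have hmem := Nat.sInf_mem hne
  have hle := Nat.sInf_le h1
  have h0 : sInf {k | GG.CopsWin k} ≠ 0 := by
    intro h; rw [h] at hmem; exact not_copsWin_zero GG 0 hmem
  unfold PeriodicGraph.copNumber
  omega

/- ------------------------------------------------------------------ -/
/- The restriction to the 4-cycle                                      -/
/- ------------------------------------------------------------------ -/

/-- The restricted periodic graph. -/
abbrev RR : PeriodicGraph SS := GG.restrict SS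

lemma mem_SS_iff {v : Fin 5} : v ∈ SS ↔ v = 0 ∨ v = 1 ∨ v = 2 ∨ v = 3 := by
  simp [Set.mem_insert_iff, Set.mem_singleton_iff]

def a0 : SS := ⟨0, by simp⟩
def a1 : SS := ⟨1, by simp⟩
def a2 : SS := ⟨2, by simp⟩
def a3 : SS := ⟨3, by simp⟩

/-- `g0` has no edges inside the 4-cycle. -/
lemma noG0 : ∀ v w : Fin 5, v ∈ SS → w ∈ SS → ¬ g0.Adj v w := by
  intro v w hv hw
  rcases mem_SS_iff.1 hv with rfl | rfl | rfl | rfl <;>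
    rcases mem_SS_iff.1 hw with rfl | rfl | rfl | rfl <;> decide

/-- adjacency in the restricted snapshot, at the level of values -/
lemma RR_adj_iff {t : ℕ} {x y : SS} :
    (RR.snap t).Adj x y ↔ (snapF t).Adj x.1 y.1 := Iff.rfl

/- The antipodal map on the 4-cycle. -/

def f4 : Fin 5 → Fin 5 := ![2, 3, 0, 1, 0]

lemma f4_mem : ∀ v ∈ SS, f4 v ∈ SS := by
  intro v hv
  rcases mem_SS_iff.1 hv with rfl | rfl | rfl | rfl <;> simp [f4]

/-- The antipodal map as a map on the subtype. -/
def ant (x : SS) : SS := ⟨f4 x.1, f4_mem _ x.2⟩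

lemma ant_ne (x : SS) : ant x ≠ x := by
  intro h
  have hv : f4 x.1 = x.1 := congrArg Subtype.val h
  rcases mem_SS_iff.1 x.2 with h' | h' | h' | h' <;> rw [h'] at hv <;> exact absurd hv (by decide)

lemma g1_ant : ∀ v w : Fin 5, v ∈ SS → w ∈ SS → g1.Adj v w → g1.Adj (f4 v) (f4 w) := by
  intro v w hv hw
  rcases mem_SS_iff.1 hv with rfl | rfl | rfl | rfl <;>
    rcases mem_SS_iff.1 hw with rfl | rfl | rfl | rfl <;> decide

lemma not_adj_ant : ∀ t : ℕ, ∀ x : SS, ¬ (snapF t).Adj x.1 (f4 x.1) := by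
  intro t x
  unfold snapF
  split
  · exact noG0 _ _ x.2 (f4_mem _ x.2)
  · rcases mem_SS_iff.1 x.2 with h | h | h | h <;> rw [h] <;> decide

/-- The antipodal map preserves closed neighbourhoods in every restricted snapshot. -/
lemma ant_cN {t : ℕ} {x y : SS} (h : y ∈ cN (RR.snap t) x) :
    ant y ∈ cN (RR.snap t) (ant x) := by
  rcases mem_cN.1 h with h | h
  · exact mem_cN.2 (Or.inl (by rw [h]))
  · refine mem_cN.2 (Or.inr ?_)
    rw [RR_adj_iff] at h ⊢
    unfold snapF at h ⊢
    split at h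
    · exact absurd h (noG0 _ _ x.2 y.2)
    · next h2 =>
      simp only [if_neg h2]
      exact g1_ant _ _ x.2 y.2 h

instance (t : ℕ) (x y : SS) : Decidable (y ∈ cN (RR.snap t) x) :=
  decidable_of_iff _ (mem_cN.trans
    (or_congr Iff.rfl (RR_adj_iff))).symm

/-- The mirroring robber strategy against one cop on `RR`. -/
def ρmir (σ : CopStrategy RR 1) : RobStrategy RR 1 where
  init := fun c => ant (c 0)
  move := fun t c r => if ant (c 0) ∈ cN (RR.snap t) r then ant (c 0) else r

lemma ρmir_legal (σ : CopStrategy RR 1) : (ρmir σ).Legal := by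
  intro t c r
  show (if ant (c 0) ∈ cN (RR.snap t) r then ant (c 0) else r) ∈ cN (RR.snap t) r
  split
  · next h => exact h
  · exact Set.mem_insert r _

lemma not_copsWin_RR_one : ¬ RR.CopsWin 1 := by
  rintro ⟨σ, hσ, hwin⟩
  obtain ⟨t, i, hcap⟩ := hwin (ρmir σ) (ρmir_legal σ)
  have hi : i = 0 := Subsingleton.elim i 0
  subst hi
  -- invariant: the robber is always at the antipode of the cop
  have hinv : ∀ t, (play σ (ρmir σ) t).2 = ant ((play σ (ρmir σ) t).1 0) := by
    intro t
    induction t with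
    | zero => rfl
    | succ t ih =>
      have e : play σ (ρmir σ) (t + 1) =
          (σ.move t (play σ (ρmir σ) t).1 (play σ (ρmir σ) t).2,
           (ρmir σ).move t (σ.move t (play σ (ρmir σ) t).1 (play σ (ρmir σ) t).2)
             (play σ (ρmir σ) t).2) := rfl
      rw [e]
      dsimp only
      rw [ih]
      set c := (play σ (ρmir σ) t).1 with hc
      set d := σ.move t c (ant (c 0)) with hd
      have hmem : ant (d 0) ∈ cN (RR.snap t) (ant (c 0)) :=
        ant_cN (hσ t c (ant (c 0)) 0)
      show (if ant (d 0) ∈ cN (RR.snap t) (ant (c 0)) then ant (d 0) else ant (c 0)) =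
        ant (d 0)
      rw [if_pos hmem]
  rcases hcap with hcap | hcap
  · rw [hinv t] at hcap
    exact ant_ne _ hcap.symm
  · -- the cop stepped onto the robber's previous position: impossible, it is the antipode
    have hmv : (play σ (ρmir σ) (t + 1)).1 0 ∈
        cN (RR.snap t) ((play σ (ρmir σ) t).1 0) :=
      hσ t (play σ (ρmir σ) t).1 (play σ (ρmir σ) t).2 0
    rw [hcap, hinv t] at hmv
    rcases mem_cN.1 hmv with h | h
    · exact ant_ne _ h
    · exact not_adj_ant t _ (RR_adj_iff.1 h)

/-- The winning two-cop strategy on `RR`: cops at `0` and `2`; each moves onto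
the robber whenever possible. -/
def σ2 : CopStrategy RR 2 where
  init := fun i => if i = 0 then a0 else a2
  move := fun t c r i => if r ∈ cN (RR.snap t) (c i) then r else c i

lemma σ2_legal : σ2.Legal := by
  intro t c r i
  show (if r ∈ cN (RR.snap t) (c i) then r else c i) ∈ cN (RR.snap t) (c i)
  split
  · next h => exact h
  · exact Set.mem_insert _ _

lemma copsWin_RR_two : RR.CopsWin 2 := by
  refine ⟨σ2, σ2_legal, ?_⟩
  intro ρ hρ
  set r0 : SS := ρ.init σ2.init with hr0def
  have e0 : play σ2 ρ 0 = (σ2.init, r0) := rfl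
  rcases mem_SS_iff.1 r0.2 with hr | hr | hr | hr
  · -- robber starts on cop 0
    refine ⟨0, 0, Or.inl ?_⟩
    rw [e0]
    show σ2.init 0 = r0
    exact (Subtype.ext hr).symm
  · -- robber at 1: nobody can move in `g0`; in round 1 cop 0 steps from 0 to 1
    have hr0 : r0 = a1 := Subtype.ext hr
    have hc1 : σ2.move 0 σ2.init r0 = σ2.init := by
      funext i
      have hneg : ¬ (r0 ∈ cN (RR.snap 0) (σ2.init i)) := by
        rw [hr0]; fin_cases i <;> decide
      show (if r0 ∈ cN (RR.snap 0) (σ2.init i) then r0 else σ2.init i) = σ2.init i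
      rw [if_neg hneg]
    have hstuck : ρ.move 0 (σ2.move 0 σ2.init r0) r0 = r0 := by
      have hm := hρ 0 (σ2.move 0 σ2.init r0) r0
      rcases mem_cN.1 hm with h | h
      · exact h
      · exact absurd (RR_adj_iff.1 h) (noG0 _ _ r0.2 (Subtype.mem _))
    have e1 : play σ2 ρ 1 = (σ2.move 0 σ2.init r0, ρ.move 0 (σ2.move 0 σ2.init r0) r0) := rfl
    refine ⟨1, 0, Or.inr ?_⟩
    have e2 : (play σ2 ρ 2).1 = σ2.move 1 (play σ2 ρ 1).1 (play σ2 ρ 1).2 := rfl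
    rw [e2, e1]
    dsimp only
    rw [hstuck, hc1, hr0]
    have hpos : a1 ∈ cN (RR.snap 1) (σ2.init 0) :=
      mem_cN.2 (Or.inr (show (snapF 1).Adj (σ2.init 0).1 a1.1 by decide))
    show (if a1 ∈ cN (RR.snap 1) (σ2.init 0) then a1 else σ2.init 0) = a1
    rw [if_pos hpos]
  · -- robber starts on cop 1
    refine ⟨0, 1, Or.inl ?_⟩
    rw [e0]
    show σ2.init 1 = r0
    exact (Subtype.ext hr).symm
  · -- robber at 3: in round 1 cop 0 steps from 0 to 3
    have hr0 : r0 = a3 := Subtype.ext hr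
    have hc1 : σ2.move 0 σ2.init r0 = σ2.init := by
      funext i
      have hneg : ¬ (r0 ∈ cN (RR.snap 0) (σ2.init i)) := by
        rw [hr0]; fin_cases i <;> decide
      show (if r0 ∈ cN (RR.snap 0) (σ2.init i) then r0 else σ2.init i) = σ2.init i
      rw [if_neg hneg]
    have hstuck : ρ.move 0 (σ2.move 0 σ2.init r0) r0 = r0 := by
      have hm := hρ 0 (σ2.move 0 σ2.init r0) r0
      rcases mem_cN.1 hm with h | h
      · exact h
      · exact absurd (RR_adj_iff.1 h) (noG0 _ _ r0.2 (Subtype.mem _))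
    have e1 : play σ2 ρ 1 = (σ2.move 0 σ2.init r0, ρ.move 0 (σ2.move 0 σ2.init r0) r0) := rfl
    refine ⟨1, 0, Or.inr ?_⟩
    have e2 : (play σ2 ρ 2).1 = σ2.move 1 (play σ2 ρ 1).1 (play σ2 ρ 1).2 := rfl
    rw [e2, e1]
    dsimp only
    rw [hstuck, hc1, hr0]
    have hpos : a3 ∈ cN (RR.snap 1) (σ2.init 0) :=
      mem_cN.2 (Or.inr (show (snapF 1).Adj (σ2.init 0).1 a3.1 by decide))
    show (if a3 ∈ cN (RR.snap 1) (σ2.init 0) then a3 else σ2.init 0) = a3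
    rw [if_pos hpos]

lemma copNumber_RR : RR.copNumber = 2 := by
  have h2 : (2 : ℕ) ∈ {k | RR.CopsWin k} := copsWin_RR_two
  have hne : {k | RR.CopsWin k}.Nonempty := ⟨2, h2⟩
  have hmem := Nat.sInf_mem hne
  have hle := Nat.sInf_le h2
  have h0 : sInf {k | RR.CopsWin k} ≠ 0 := by
    intro h; rw [h] at hmem; exact not_copsWin_zero RR a0 hmem
  have h1 : sInf {k | RR.CopsWin k} ≠ 1 := by
    intro h; rw [h] at hmem; exact not_copsWin_RR_one hmem
  unfold PeriodicGraph.copNumber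
  omega

end CntEx

/-- There is a periodic graph `𝒢` with footprint `cntG` and a
retraction of `cntG` onto the 4-cycle `H` on `{a,b,c,d} = {0,1,2,3}` such that
`c(𝒢) = 1` while `c(𝒢[H]) = 2`; in particular `c(𝒢[H]) > c(𝒢)`. -/
theorem retract_copNumber_not_monotone :
    ∃ 𝒢 : PeriodicGraph (Fin 5),
      𝒢.footprint = cntG ∧
      (∃ h : Fin 5 → Fin 5,
        Set.range h = ({0, 1, 2, 3} : Set (Fin 5)) ∧
        (∀ x ∈ ({0, 1, 2, 3} : Set (Fin 5)), h x = x) ∧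
        (∀ x y, cntG.Adj x y → h x = h y ∨ cntG.Adj (h x) (h y))) ∧
      𝒢.copNumber = 1 ∧
      (𝒢.restrict ({0, 1, 2, 3} : Set (Fin 5))).copNumber = 2 ∧
      𝒢.copNumber < (𝒢.restrict ({0, 1, 2, 3} : Set (Fin 5))).copNumber := by
  refine ⟨CntEx.GG, CntEx.footprint_GG,
    ⟨CntEx.retr, CntEx.retr_range, CntEx.retr_fix, CntEx.retr_hom⟩,
    CntEx.copNumber_GG, CntEx.copNumber_RR, ?_⟩
  rw [CntEx.copNumber_GG, CntEx.copNumber_RR]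
  norm_num
end

section
/- In the periodic graph 𝒢 = ⟨G_0,G_1,G_2⟩ on {0,1}^3 where E(G_i) is exactly the set of hypercube edges flipping coordinate i, three cops starting at 000, 010, 111 can capture the robber. Hence c(𝒢) ≤ 3. -/
/-- Snapshot `i` of the hypercube periodic graph: exactly the edges of `Q_3`
that flip coordinate `i`. -/
def cubeSnap (i : Fin 3) : SimpleGraph (Fin 3 → Bool) where
  Adj x y := x i ≠ y i ∧ ∀ j, j ≠ i → x j = y j
  symm := by
    constructor
    rintro x y ⟨h1, h2⟩
    exact ⟨Ne.symm h1, fun j hj => (h2 j hj).symm⟩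
  loopless := by
    constructor
    rintro x ⟨h1, _⟩
    exact h1 rfl

/-- The hypercube `Q_3` on `{0,1}^3`: vertices adjacent iff they differ in
exactly one coordinate. -/
def cubeQ3 : SimpleGraph (Fin 3 → Bool) where
  Adj x y := ∃ i : Fin 3, x i ≠ y i ∧ ∀ j, j ≠ i → x j = y j
  symm := by
    constructor
    rintro x y ⟨i, h1, h2⟩
    exact ⟨i, Ne.symm h1, fun j hj => (h2 j hj).symm⟩
  loopless := by
    constructor
    rintro x ⟨i, h1, _⟩
    exact h1 rfl

/-- The periodic graph `⟨G_0,G_1,G_2⟩` of period 3 on `{0,1}^3` where `G_i`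
consists exactly of the hypercube edges flipping coordinate `i`. -/
def cubePG : PeriodicGraph (Fin 3 → Bool) where
  p := 3
  p_pos := by norm_num
  snap t := cubeSnap ⟨t % 3, by omega⟩
  periodic t := congrArg cubeSnap (Fin.ext (Nat.add_mod_right t 3))


/-- Flip coordinate `i` of a bit vector. -/
def flipb (i : Fin 3) (x : Fin 3 → Bool) : Fin 3 → Bool := Function.update x i (!x i)

lemma flipb_apply_self (i : Fin 3) (x : Fin 3 → Bool) : flipb i x i = !x i := by
  simp [flipb]

lemma flipb_apply_ne (i j : Fin 3) (x : Fin 3 → Bool) (h : j ≠ i) : flipb i x j = x j := by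
  simp [flipb, Function.update_of_ne h]

lemma adj_flipb (i : Fin 3) (x : Fin 3 → Bool) : (cubeSnap i).Adj x (flipb i x) := by
  refine ⟨?_, fun j hj => (flipb_apply_ne i j x hj).symm⟩
  rw [flipb_apply_self]
  cases x i <;> simp

lemma mem_cN_cubeSnap {i : Fin 3} {x y : Fin 3 → Bool}
    (h : y ∈ cN (cubeSnap i) x) : y = x ∨ y = flipb i x := by
  rcases h with h | h
  · exact Or.inl h
  · right
    obtain ⟨h1, h2⟩ := h
    funext j
    by_cases hj : j = i
    · subst hj
      rw [flipb_apply_self]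
      cases hx : x j <;> cases hy : y j <;> simp_all
    · rw [flipb_apply_ne i j x hj, h2 j hj]

/-- The "pounce" move: each cop flips the current bit iff that lands on the robber. -/
def mv (t : Fin 3) (c : Fin 3 → (Fin 3 → Bool)) (r : Fin 3 → Bool) : Fin 3 → (Fin 3 → Bool) :=
  fun i => if flipb t (c i) = r then flipb t (c i) else c i

lemma mv_mem_cN (t : Fin 3) (c : Fin 3 → (Fin 3 → Bool)) (r : Fin 3 → Bool) (i : Fin 3) :
    mv t c r i ∈ cN (cubeSnap t) (c i) := by
  unfold mv
  by_cases h : flipb t (c i) = r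
  · simp only [h, if_pos rfl]
    rw [← h]
    exact Or.inr (adj_flipb t (c i))
  · simp only [if_neg h]
    exact Or.inl rfl

def caughtB (c : Fin 3 → (Fin 3 → Bool)) (r : Fin 3 → Bool) : Bool :=
  decide (∃ i, c i = r)

/-- Cops (using `mv`) capture within `n+1` rounds from state `(t, c, r)`. -/
def winIn : ℕ → Fin 3 → (Fin 3 → (Fin 3 → Bool)) → (Fin 3 → Bool) → Bool
  | 0, t, c, r => caughtB c r || caughtB (mv t c r) r
  | n + 1, t, c, r =>
    caughtB c r || (caughtB (mv t c r) r ||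
      (winIn n (t + 1) (mv t c r) r && winIn n (t + 1) (mv t c r) (flipb t r)))

/-- The concrete cop strategy. -/
def cubeStrat : PeriodicGraph.CopStrategy cubePG 3 where
  init := ![(fun _ => false), (fun j => j == 1), (fun _ => true)]
  move t c r := mv ⟨t % 3, by omega⟩ c r

lemma fin_succ_mod (t : ℕ) :
    (⟨t % 3, Nat.mod_lt t (by norm_num)⟩ : Fin 3) + 1 = ⟨(t + 1) % 3, Nat.mod_lt _ (by norm_num)⟩ := by
  apply Fin.ext
  show (t % 3 + 1) % 3 = (t + 1) % 3
  omega

lemma bridge (ρ : PeriodicGraph.RobStrategy cubePG 3) (hρ : ρ.Legal) :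
    ∀ n t, winIn n ⟨t % 3, Nat.mod_lt t (by norm_num)⟩
      (PeriodicGraph.play cubeStrat ρ t).1 (PeriodicGraph.play cubeStrat ρ t).2 = true →
      PeriodicGraph.Captured cubeStrat ρ := by
  intro n
  induction n with
  | zero =>
    intro t h
    simp only [winIn, Bool.or_eq_true, caughtB, decide_eq_true_eq] at h
    rcases h with ⟨i, hi⟩ | ⟨i, hi⟩
    · exact ⟨t, i, Or.inl hi⟩
    · exact ⟨t, i, Or.inr hi⟩
  | succ n ih =>
    intro t h
    simp only [winIn, Bool.or_eq_true, Bool.and_eq_true, caughtB, decide_eq_true_eq] at h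
    rcases h with ⟨i, hi⟩ | ⟨i, hi⟩ | ⟨h1, h2⟩
    · exact ⟨t, i, Or.inl hi⟩
    · exact ⟨t, i, Or.inr hi⟩
    · apply ih (t + 1)
      have hleg := hρ t (PeriodicGraph.play cubeStrat ρ t).1 (PeriodicGraph.play cubeStrat ρ t).2
      have hmem : ρ.move t (cubeStrat.move t (PeriodicGraph.play cubeStrat ρ t).1
            (PeriodicGraph.play cubeStrat ρ t).2) (PeriodicGraph.play cubeStrat ρ t).2
          ∈ cN (cubeSnap ⟨t % 3, Nat.mod_lt t (by norm_num)⟩)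
            (PeriodicGraph.play cubeStrat ρ t).2 :=
        hρ t _ _
      have hsucc : (PeriodicGraph.play cubeStrat ρ (t + 1)).1 =
          mv ⟨t % 3, Nat.mod_lt t (by norm_num)⟩ (PeriodicGraph.play cubeStrat ρ t).1
            (PeriodicGraph.play cubeStrat ρ t).2 := rfl
      rw [← fin_succ_mod t, hsucc]
      have hr2 : (PeriodicGraph.play cubeStrat ρ (t + 1)).2 =
          ρ.move t (cubeStrat.move t (PeriodicGraph.play cubeStrat ρ t).1
            (PeriodicGraph.play cubeStrat ρ t).2) (PeriodicGraph.play cubeStrat ρ t).2 := rfl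
      rcases mem_cN_cubeSnap hmem with hr | hr
      · rw [hr2, hr]; exact h1
      · rw [hr2, hr]; exact h2

/-- Three cops starting at `000`, `010`, `111` have a winning
strategy on the hypercube periodic graph; hence `c(𝒢) ≤ 3`. -/
theorem cubePG_three_cops_win :
    (∃ σ : PeriodicGraph.CopStrategy cubePG 3,
      σ.init = ![(fun _ => false), (fun j => j == 1), (fun _ => true)] ∧
      σ.Legal ∧
      ∀ ρ : PeriodicGraph.RobStrategy cubePG 3, ρ.Legal → PeriodicGraph.Captured σ ρ) ∧
    cubePG.copNumber ≤ 3 := by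
  have hwin : ∀ ρ : PeriodicGraph.RobStrategy cubePG 3, ρ.Legal →
      PeriodicGraph.Captured cubeStrat ρ := by
    intro ρ hρ
    apply bridge ρ hρ 3 0
    have h0 : (⟨0 % 3, Nat.mod_lt 0 (by norm_num)⟩ : Fin 3) = 0 := rfl
    rw [h0]
    have hd : ∀ r : Fin 3 → Bool,
        winIn 3 0 (![(fun _ => false), (fun j => j == 1), (fun _ => true)]) r = true := by
      decide
    exact hd _
  have hlegal : cubeStrat.Legal := fun t c r i => mv_mem_cN _ c r i
  have hcw : cubePG.CopsWin 3 := ⟨cubeStrat, hlegal, hwin⟩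
  refine ⟨⟨cubeStrat, rfl, hlegal, hwin⟩, ?_⟩
  exact Nat.sInf_le hcw
end

section
/- In the periodic graph 𝒢 = ⟨G_0,G_1,G_2⟩ on {0,1}^3 where E(G_i) is exactly the set of hypercube edges flipping coordinate i, two cops cannot capture the robber; hence c(𝒢) > 2. -/
section CubeAux

open PeriodicGraph

abbrev Vc : Type := Fin 3 → Bool

/-- Flip coordinate `i`. -/
def flipB (i : Fin 3) (x : Vc) : Vc := Function.update x i (!x i)

lemma cubeSnap_adj_iff (i : Fin 3) (u x : Vc) :
    (cubeSnap i).Adj u x ↔ x = flipB i u := by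
  constructor
  · rintro ⟨h1, h2⟩
    funext j
    by_cases hj : j = i
    · subst hj
      simp only [flipB, Function.update_self]
      cases hu : u j <;> cases hx : x j <;> simp_all
    · rw [flipB, Function.update_of_ne hj]
      exact (h2 j hj).symm
  · rintro rfl
    refine ⟨?_, fun j hj => ?_⟩
    · simp only [flipB, Function.update_self]
      cases u i <;> simp
    · rw [flipB, Function.update_of_ne hj]

lemma mem_cN_iff (i : Fin 3) (u x : Vc) :
    x ∈ cN (cubeSnap i) u ↔ x = u ∨ x = flipB i u := by
  simp [cN, Set.mem_insert_iff, Set.mem_setOf_eq, cubeSnap_adj_iff]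

/-- The phase at round `t`. -/
def ph (t : ℕ) : Fin 3 := ⟨t % 3, Nat.mod_lt _ (by norm_num)⟩

lemma snap_eq (t : ℕ) : cubePG.snap t = cubeSnap (ph t) := rfl

lemma ph_succ (t : ℕ) : ph t + 1 = ph (t + 1) := by
  apply Fin.ext
  show (t % 3 + (1 % 3)) % 3 = (t + 1) % 3
  omega

/-- Robber's safety invariant against two cops at the start of a round with
phase `i`: no cop can reach the robber this round, and the robber is not in
a common 4-face of the cube with both cops. -/
def Inv2 (i : Fin 3) (c0 c1 r : Vc) : Prop :=
  r ≠ c0 ∧ r ≠ c1 ∧ r ≠ flipB i c0 ∧ r ≠ flipB i c1 ∧ ∀ j, r j ≠ c0 j ∨ r j ≠ c1 j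

instance (i : Fin 3) (c0 c1 r : Vc) : Decidable (Inv2 i c0 c1 r) := by
  unfold Inv2; infer_instance

lemma init2 : ∀ c0 c1 : Vc, ∃ r, Inv2 0 c0 c1 r := by decide

lemma step2 : ∀ (i : Fin 3) (c0 c1 r : Vc), Inv2 i c0 c1 r →
    ∀ c0' c1' : Vc, (c0' = c0 ∨ c0' = flipB i c0) → (c1' = c1 ∨ c1' = flipB i c1) →
    ∃ r', (r' = r ∨ r' = flipB i r) ∧ Inv2 (i + 1) c0' c1' r' := by decide

noncomputable def rob2init (c : Fin 2 → Vc) : Vc :=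
  if h : ∃ r, Inv2 0 (c 0) (c 1) r then h.choose else c 0

noncomputable def rob2move (t : ℕ) (c : Fin 2 → Vc) (r : Vc) : Vc :=
  if h : ∃ r', (r' = r ∨ r' = flipB (ph t) r) ∧ Inv2 (ph t + 1) (c 0) (c 1) r' then
    h.choose
  else r

/-- The evading robber strategy against two cops. -/
noncomputable def rob2 : RobStrategy cubePG 2 := ⟨rob2init, rob2move⟩

lemma rob2_legal : rob2.Legal := by
  intro t c r
  rw [show cubePG.snap t = cubeSnap (ph t) from rfl, mem_cN_iff]
  show rob2move t c r = r ∨ rob2move t c r = flipB (ph t) r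
  unfold rob2move
  split_ifs with h
  · exact h.choose_spec.1
  · exact Or.inl rfl

lemma inv2_play (σ : CopStrategy cubePG 2) (hσ : σ.Legal) (t : ℕ) :
    Inv2 (ph t) ((play σ rob2 t).1 0) ((play σ rob2 t).1 1) (play σ rob2 t).2 := by
  induction t with
  | zero =>
    have h := init2 (σ.init 0) (σ.init 1)
    show Inv2 (ph 0) (σ.init 0) (σ.init 1) (rob2init σ.init)
    unfold rob2init
    rw [dif_pos h]
    exact h.choose_spec
  | succ t ih =>
    have hc0 : σ.move t (play σ rob2 t).1 (play σ rob2 t).2 0 = (play σ rob2 t).1 0 ∨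
        σ.move t (play σ rob2 t).1 (play σ rob2 t).2 0 = flipB (ph t) ((play σ rob2 t).1 0) :=
      (mem_cN_iff _ _ _).1 (hσ t _ _ 0)
    have hc1 : σ.move t (play σ rob2 t).1 (play σ rob2 t).2 1 = (play σ rob2 t).1 1 ∨
        σ.move t (play σ rob2 t).1 (play σ rob2 t).2 1 = flipB (ph t) ((play σ rob2 t).1 1) :=
      (mem_cN_iff _ _ _).1 (hσ t _ _ 1)
    have hstep := step2 (ph t) _ _ _ ih _ _ hc0 hc1
    rw [← ph_succ]
    show Inv2 (ph t + 1) _ _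
      (rob2move t (σ.move t (play σ rob2 t).1 (play σ rob2 t).2) (play σ rob2 t).2)
    unfold rob2move
    rw [dif_pos hstep]
    exact hstep.choose_spec.2

lemma not_copsWin_two : ¬ cubePG.CopsWin 2 := by
  rintro ⟨σ, hσ, hwin⟩
  obtain ⟨t, i, hcap⟩ := hwin rob2 rob2_legal
  have ih := inv2_play σ hσ t
  rcases hcap with h | h
  · fin_cases i
    · exact ih.1 h.symm
    · exact ih.2.1 h.symm
  · have hm := (mem_cN_iff (ph t) ((play σ rob2 t).1 i)
      (σ.move t (play σ rob2 t).1 (play σ rob2 t).2 i)).1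
      (hσ t (play σ rob2 t).1 (play σ rob2 t).2 i)
    have h' : σ.move t (play σ rob2 t).1 (play σ rob2 t).2 i = (play σ rob2 t).2 := h
    rw [h'] at hm
    fin_cases i
    · rcases hm with hm | hm
      · exact ih.1 hm
      · exact ih.2.2.1 hm
    · rcases hm with hm | hm
      · exact ih.2.1 hm
      · exact ih.2.2.2.1 hm

/-- Robber's safety invariant against one cop. -/
def Inv1 (i : Fin 3) (c r : Vc) : Prop :=
  r ≠ c ∧ r ≠ flipB i c ∧ ∀ j, r j ≠ c j

instance (i : Fin 3) (c r : Vc) : Decidable (Inv1 i c r) := by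
  unfold Inv1; infer_instance

lemma init1 : ∀ c : Vc, ∃ r, Inv1 0 c r := by decide

lemma step1 : ∀ (i : Fin 3) (c r : Vc), Inv1 i c r →
    ∀ c' : Vc, (c' = c ∨ c' = flipB i c) →
    ∃ r', (r' = r ∨ r' = flipB i r) ∧ Inv1 (i + 1) c' r' := by decide

noncomputable def rob1init (c : Fin 1 → Vc) : Vc :=
  if h : ∃ r, Inv1 0 (c 0) r then h.choose else c 0

noncomputable def rob1move (t : ℕ) (c : Fin 1 → Vc) (r : Vc) : Vc :=
  if h : ∃ r', (r' = r ∨ r' = flipB (ph t) r) ∧ Inv1 (ph t + 1) (c 0) r' then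
    h.choose
  else r

/-- The evading robber strategy against one cop. -/
noncomputable def rob1 : RobStrategy cubePG 1 := ⟨rob1init, rob1move⟩

lemma rob1_legal : rob1.Legal := by
  intro t c r
  rw [show cubePG.snap t = cubeSnap (ph t) from rfl, mem_cN_iff]
  show rob1move t c r = r ∨ rob1move t c r = flipB (ph t) r
  unfold rob1move
  split_ifs with h
  · exact h.choose_spec.1
  · exact Or.inl rfl

lemma inv1_play (σ : CopStrategy cubePG 1) (hσ : σ.Legal) (t : ℕ) :
    Inv1 (ph t) ((play σ rob1 t).1 0) (play σ rob1 t).2 := by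
  induction t with
  | zero =>
    have h := init1 (σ.init 0)
    show Inv1 (ph 0) (σ.init 0) (rob1init σ.init)
    unfold rob1init
    rw [dif_pos h]
    exact h.choose_spec
  | succ t ih =>
    have hc0 : σ.move t (play σ rob1 t).1 (play σ rob1 t).2 0 = (play σ rob1 t).1 0 ∨
        σ.move t (play σ rob1 t).1 (play σ rob1 t).2 0 = flipB (ph t) ((play σ rob1 t).1 0) :=
      (mem_cN_iff _ _ _).1 (hσ t _ _ 0)
    have hstep := step1 (ph t) _ _ ih _ hc0
    rw [← ph_succ]
    show Inv1 (ph t + 1) _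
      (rob1move t (σ.move t (play σ rob1 t).1 (play σ rob1 t).2) (play σ rob1 t).2)
    unfold rob1move
    rw [dif_pos hstep]
    exact hstep.choose_spec.2

lemma not_copsWin_one : ¬ cubePG.CopsWin 1 := by
  rintro ⟨σ, hσ, hwin⟩
  obtain ⟨t, i, hcap⟩ := hwin rob1 rob1_legal
  have ih := inv1_play σ hσ t
  rcases hcap with h | h
  · fin_cases i
    exact ih.1 h.symm
  · have hm := (mem_cN_iff (ph t) ((play σ rob1 t).1 i)
      (σ.move t (play σ rob1 t).1 (play σ rob1 t).2 i)).1
      (hσ t (play σ rob1 t).1 (play σ rob1 t).2 i)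
    have h' : σ.move t (play σ rob1 t).1 (play σ rob1 t).2 i = (play σ rob1 t).2 := h
    rw [h'] at hm
    fin_cases i
    rcases hm with hm | hm
    · exact ih.1 hm
    · exact ih.2.1 hm

lemma not_copsWin_zero : ¬ cubePG.CopsWin 0 := by
  rintro ⟨σ, hσ, hwin⟩
  obtain ⟨t, i, -⟩ := hwin ⟨fun _ _ => false, fun _ _ r => r⟩
    (fun t c r => Set.mem_insert _ _)
  exact i.elim0

lemma copsWin_eight : cubePG.CopsWin 8 := by
  have hcard : Fintype.card Vc = 8 := by simp
  let e : Vc ≃ Fin 8 := Fintype.equivFinOfCardEq hcard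
  refine ⟨⟨fun i => e.symm i, fun _ c _ => c⟩, fun t c r i => Set.mem_insert _ _, ?_⟩
  intro ρ hρ
  refine ⟨0, e (ρ.init fun i => e.symm i), Or.inl ?_⟩
  show e.symm (e _) = _
  rw [Equiv.symm_apply_apply]
  rfl

end CubeAux

/-- Two cops cannot capture the robber on the hypercube periodic
graph; hence `c(𝒢) > 2`. -/
theorem cubePG_two_cops_lose :
    ¬ cubePG.CopsWin 2 ∧ 2 < cubePG.copNumber := by
  refine ⟨not_copsWin_two, ?_⟩
  have hne : {k | cubePG.CopsWin k}.Nonempty := ⟨8, copsWin_eight⟩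
  have hm : cubePG.CopsWin (sInf {k | cubePG.CopsWin k}) := Nat.sInf_mem hne
  by_contra h
  push_neg at h
  have h2 : sInf {k | cubePG.CopsWin k} ≤ 2 := h
  rcases (by omega : sInf {k | cubePG.CopsWin k} = 0 ∨
      sInf {k | cubePG.CopsWin k} = 1 ∨ sInf {k | cubePG.CopsWin k} = 2) with h0 | h0 | h0 <;>
    rw [h0] at hm
  · exact not_copsWin_zero hm
  · exact not_copsWin_one hm
  · exact not_copsWin_two hm
end

section
/- Every 3-copwin periodic graph has at least five vertices; equivalently, if a periodic graph 𝒢 has at most four vertices then c(𝒢) ≤ 2. -/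
namespace PeriodicGraph

section Aux

variable {V : Type*}

open Classical in
/-- The "greedy" two-cop strategy with cops stationed at `a` and `b`:
each cop moves onto the robber if adjacent, and otherwise stands still. -/
noncomputable def greedy (𝒢 : PeriodicGraph V) (a b : V) : CopStrategy 𝒢 2 where
  init := ![a, b]
  move := fun t cps r i => if (𝒢.snap t).Adj (cps i) r then r else cps i

lemma greedy_legal (𝒢 : PeriodicGraph V) (a b : V) : (greedy 𝒢 a b).Legal := by
  intro t c r i
  simp only [greedy]
  by_cases h : (𝒢.snap t).Adj (c i) r
  · rw [if_pos h]; exact Set.mem_insert_iff.mpr (Or.inr h)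
  · rw [if_neg h]; exact Set.mem_insert _ _

/-- The robber can survive forever against the greedy cops at `x`, `y`. -/
def Surv (𝒢 : PeriodicGraph V) (x y : V) : Prop :=
  ∃ r : ℕ → V,
    (∀ t, r t ≠ x ∧ r t ≠ y ∧ ¬(𝒢.snap t).Adj x (r t) ∧ ¬(𝒢.snap t).Adj y (r t)) ∧
    ∀ t, r (t + 1) ∈ cN (𝒢.snap t) (r t)

lemma win_or_surv (𝒢 : PeriodicGraph V) (x y : V) : 𝒢.CopsWin 2 ∨ 𝒢.Surv x y := by
  by_cases hw : ∀ ρ : RobStrategy 𝒢 2, ρ.Legal → Captured (greedy 𝒢 x y) ρ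
  · exact Or.inl ⟨greedy 𝒢 x y, greedy_legal 𝒢 x y, hw⟩
  · right
    classical
    push_neg at hw
    obtain ⟨ρ, hρ, hc⟩ := hw
    set σ := greedy 𝒢 x y with hσ
    simp only [Captured, not_exists, not_or] at hc
    have hmove : ∀ t i, (play σ ρ (t + 1)).1 i =
        if (𝒢.snap t).Adj ((play σ ρ t).1 i) ((play σ ρ t).2) then (play σ ρ t).2
        else (play σ ρ t).1 i := fun t i => rfl
    have hAdj : ∀ t i, ¬ (𝒢.snap t).Adj ((play σ ρ t).1 i) ((play σ ρ t).2) := by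
      intro t i h
      apply (hc t i).2
      rw [hmove t i, if_pos h]
    have hstay : ∀ t i, (play σ ρ t).1 i = ![x, y] i := by
      intro t
      induction t with
      | zero => intro i; rfl
      | succ t ih =>
        intro i
        rw [hmove t i, if_neg (hAdj t i)]
        exact ih i
    refine ⟨fun t => (play σ ρ t).2, fun t => ⟨?_, ?_, ?_, ?_⟩, fun t => ?_⟩
    · have := (hc t 0).1
      rw [hstay t 0] at this
      simpa using fun h => this h.symm
    · have := (hc t 1).1
      rw [hstay t 1] at this
      simpa using fun h => this h.symm
    · have := hAdj t 0
      rw [hstay t 0] at this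
      simpa using this
    · have := hAdj t 1
      rw [hstay t 1] at this
      simpa using this
    · show (play σ ρ (t + 1)).2 ∈ _
      exact hρ t _ _

lemma footprint_adj {𝒢 : PeriodicGraph V} {u v : V} :
    𝒢.footprint.Adj u v ↔ ∃ t, (𝒢.snap t).Adj u v :=
  SimpleGraph.iSup_adj

lemma snap_add_mul (𝒢 : PeriodicGraph V) (t k : ℕ) :
    𝒢.snap (t + k * 𝒢.p) = 𝒢.snap t := by
  induction k with
  | zero => simp
  | succ k ih =>
    have h : t + (k + 1) * 𝒢.p = (t + k * 𝒢.p) + 𝒢.p := by ring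
    rw [h, 𝒢.periodic, ih]

/-- If every vertex off `{a,b}` has all of its footprint neighbours in `{a,b}`,
then greedy cops at `a, b` win. -/
lemma copsWin_of_pinned (𝒢 : PeriodicGraph V) (hconn : 𝒢.footprint.Connected) (a b : V)
    (hp : ∀ v, v ≠ a → v ≠ b → ∀ u, 𝒢.footprint.Adj v u → u = a ∨ u = b) :
    𝒢.CopsWin 2 := by
  rcases win_or_surv 𝒢 a b with h | ⟨r, pr, mr⟩
  · exact h
  · exfalso
    have hconst : ∀ t, r t = r 0 := by
      intro t
      induction t with
      | zero => rfl
      | succ t ih =>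
        rcases Set.mem_insert_iff.mp (mr t) with h | h
        · rw [h, ih]
        · exfalso
          have hfp : 𝒢.footprint.Adj (r t) (r (t + 1)) := footprint_adj.mpr ⟨t, h⟩
          rcases hp (r t) (pr t).1 (pr t).2.1 _ hfp with h1 | h1
          · exact (pr (t + 1)).1 h1
          · exact (pr (t + 1)).2.1 h1
    obtain ⟨w⟩ := hconn.preconnected (r 0) a
    cases w with
    | nil => exact (pr 0).1 rfl
    | cons h p =>
      rename_i z
      obtain ⟨t, ht⟩ := footprint_adj.mp h
      rcases hp (r 0) (pr 0).1 (pr 0).2.1 _ h with h1 | h1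
      · apply (pr t).2.2.1
        rw [hconst t]
        exact (h1 ▸ ht).symm
      · apply (pr t).2.2.2
        rw [hconst t]
        exact (h1 ▸ ht).symm

lemma change_point (f : ℕ → V) (u : V) {s e : ℕ} (hse : s ≤ e) (hs : f s = u)
    (he : f e ≠ u) : ∃ q, s ≤ q ∧ q < e ∧ f q = u ∧ f (q + 1) ≠ u := by
  by_contra hcon
  push_neg at hcon
  have key : ∀ k, s + k ≤ e → f (s + k) = u := by
    intro k
    induction k with
    | zero => intro _; simpa using hs
    | succ k ih =>
      intro h
      have h2 : f (s + k) = u := ih (by omega)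
      have := hcon (s + k) (by omega) (by omega) h2
      exact this
  apply he
  have := key (e - s) (by omega)
  rwa [Nat.add_sub_cancel' hse] at this

lemma copsWin_of_complete (𝒢 : PeriodicGraph V) (a b c d : V)
    (hab : a ≠ b) (hac : a ≠ c) (had : a ≠ d) (hbc : b ≠ c) (hbd : b ≠ d) (hcd : c ≠ d)
    (huniv : ∀ v : V, v = a ∨ v = b ∨ v = c ∨ v = d)
    (hcomp : ∀ u v : V, u ≠ v → 𝒢.footprint.Adj u v) : 𝒢.CopsWin 2 := by
  classical
  by_contra hW
  have nw : ∀ x y : V, 𝒢.Surv x y := fun x y => (win_or_surv 𝒢 x y).resolve_left hW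
  obtain ⟨rcd, pcd, mcd⟩ := nw a b
  obtain ⟨rac, pac, mac⟩ := nw b d
  obtain ⟨rbd, pbd, mbd⟩ := nw a c
  obtain ⟨rbc, pbc, mbc⟩ := nw a d
  obtain ⟨rad, pad, mad⟩ := nw b c
  obtain ⟨s, hsab⟩ := footprint_adj.mp (hcomp a b hab)
  obtain ⟨t0, ht0⟩ := footprint_adj.mp (hcomp c d hcd)
  have hex : ∃ t, s < t ∧ (𝒢.snap t).Adj c d := by
    refine ⟨t0 + (s + 1) * 𝒢.p, ?_, ?_⟩
    · have h1 : (s + 1) * 1 ≤ (s + 1) * 𝒢.p := Nat.mul_le_mul_left _ 𝒢.p_pos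
      omega
    · rw [snap_add_mul]; exact ht0
  set e := Nat.find hex with hedef
  have heP : s < e ∧ (𝒢.snap e).Adj c d := Nat.find_spec hex
  have hemin : ∀ m, m < e → ¬(s < m ∧ (𝒢.snap m).Adj c d) := fun m hm => Nat.find_min hex hm
  -- r_{ac} is at c at time s and at a at time e
  have hracs : rac s = c := by
    rcases huniv (rac s) with h | h | h | h
    · exact absurd (by rw [h]; exact hsab.symm) (pac s).2.2.1
    · exact absurd h (pac s).1
    · exact h
    · exact absurd h (pac s).2.1
  have hrace : rac e ≠ c := fun h => (pac e).2.2.2 (by rw [h]; exact heP.2.symm)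
  obtain ⟨q1, hsq1, hq1e, hq1c, hq1ne⟩ := change_point rac c (le_of_lt heP.1) hracs hrace
  have hq1a : rac (q1 + 1) = a := by
    rcases huniv (rac (q1 + 1)) with h | h | h | h
    · exact h
    · exact absurd h (pac (q1 + 1)).1
    · exact absurd h hq1ne
    · exact absurd h (pac (q1 + 1)).2.1
  have hq1adj : (𝒢.snap q1).Adj c a := by
    rcases Set.mem_insert_iff.mp (mac q1) with h | h
    · rw [hq1c] at h; exact absurd h hq1ne
    · rw [hq1c, hq1a] at h; exact h
  have hsltq1 : s < q1 := by
    rcases Nat.lt_or_ge s q1 with h | h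
    · exact h
    · exfalso
      have hq1s : q1 = s := le_antisymm h hsq1
      rcases huniv (rbc s) with h1 | h1 | h1 | h1
      · exact (pbc s).1 h1
      · exact (pbc s).2.2.1 (by rw [h1]; exact hsab)
      · exact (pbc s).2.2.1 (by rw [h1]; exact (hq1s ▸ hq1adj).symm)
      · exact (pbc s).2.1 h1
  -- r_{bd} is at d at time s and at b at time e
  have hrbds : rbd s = d := by
    rcases huniv (rbd s) with h | h | h | h
    · exact absurd h (pbd s).1
    · exact absurd (by rw [h]; exact hsab) (pbd s).2.2.1
    · exact absurd h (pbd s).2.1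
    · exact h
  have hrbde : rbd e ≠ d := fun h => (pbd e).2.2.2 (by rw [h]; exact heP.2)
  obtain ⟨q2, hsq2, hq2e, hq2d, hq2ne⟩ := change_point rbd d (le_of_lt heP.1) hrbds hrbde
  have hq2b : rbd (q2 + 1) = b := by
    rcases huniv (rbd (q2 + 1)) with h | h | h | h
    · exact absurd h (pbd (q2 + 1)).1
    · exact h
    · exact absurd h (pbd (q2 + 1)).2.1
    · exact absurd h hq2ne
  have hq2adj : (𝒢.snap q2).Adj d b := by
    rcases Set.mem_insert_iff.mp (mbd q2) with h | h
    · rw [hq2d] at h; exact absurd h hq2ne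
    · rw [hq2d, hq2b] at h; exact h
  have hsltq2 : s < q2 := by
    rcases Nat.lt_or_ge s q2 with h | h
    · exact h
    · exfalso
      have hq2s : q2 = s := le_antisymm h hsq2
      rcases huniv (rad s) with h1 | h1 | h1 | h1
      · exact (pad s).2.2.1 (by rw [h1]; exact hsab.symm)
      · exact (pad s).1 h1
      · exact (pad s).2.1 h1
      · exact (pad s).2.2.1 (by rw [h1]; exact (hq2s ▸ hq2adj).symm)
  -- r_{cd} is at d at time q1 and at c at time q2
  have hrcdq1 : rcd q1 = d := by
    rcases huniv (rcd q1) with h | h | h | h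
    · exact absurd h (pcd q1).1
    · exact absurd h (pcd q1).2.1
    · exact absurd (by rw [h]; exact hq1adj.symm) (pcd q1).2.2.1
    · exact h
  have hrcdq2 : rcd q2 = c := by
    rcases huniv (rcd q2) with h | h | h | h
    · exact absurd h (pcd q2).1
    · exact absurd h (pcd q2).2.1
    · exact h
    · exact absurd (by rw [h]; exact hq2adj.symm) (pcd q2).2.2.2
  rcases lt_trichotomy q1 q2 with hlt | heq | hgt
  · obtain ⟨q3, hq3l, hq3r, hq3d, hq3ne⟩ :=
      change_point rcd d (le_of_lt hlt) hrcdq1 (by rw [hrcdq2]; exact hcd)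
    have hq3c : rcd (q3 + 1) = c := by
      rcases huniv (rcd (q3 + 1)) with h | h | h | h
      · exact absurd h (pcd (q3 + 1)).1
      · exact absurd h (pcd (q3 + 1)).2.1
      · exact h
      · exact absurd h hq3ne
    have hq3adj : (𝒢.snap q3).Adj d c := by
      rcases Set.mem_insert_iff.mp (mcd q3) with h | h
      · rw [hq3d] at h; exact absurd h hq3ne
      · rw [hq3d, hq3c] at h; exact h
    exact hemin q3 (lt_trans hq3r hq2e) ⟨lt_of_lt_of_le hsltq1 hq3l, hq3adj.symm⟩
  · rw [heq, hrcdq2] at hrcdq1; exact hcd hrcdq1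
  · obtain ⟨q3, hq3l, hq3r, hq3c, hq3ne⟩ :=
      change_point rcd c (le_of_lt hgt) hrcdq2 (by rw [hrcdq1]; exact hcd.symm)
    have hq3d : rcd (q3 + 1) = d := by
      rcases huniv (rcd (q3 + 1)) with h | h | h | h
      · exact absurd h (pcd (q3 + 1)).1
      · exact absurd h (pcd (q3 + 1)).2.1
      · exact absurd h hq3ne
      · exact h
    have hq3adj : (𝒢.snap q3).Adj c d := by
      rcases Set.mem_insert_iff.mp (mcd q3) with h | h
      · rw [hq3c] at h; exact absurd h hq3ne
      · rw [hq3c, hq3d] at h; exact h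
    exact hemin q3 (lt_trans hq3r hq1e) ⟨lt_of_lt_of_le hsltq2 hq3l, hq3adj⟩

lemma cover3 {V : Type*} [Fintype V] [Nonempty V] (h : Fintype.card V ≤ 3) :
    ∃ x y z : V, ∀ v : V, v = x ∨ v = y ∨ v = z := by
  classical
  have hpos : 0 < Fintype.card V := Fintype.card_pos
  have h0 : Fintype.card V = 1 ∨ Fintype.card V = 2 ∨ Fintype.card V = 3 := by omega
  rcases h0 with h1 | h2 | h3
  · have hu : (Finset.univ : Finset V).card = 1 := by rw [Finset.card_univ]; exact h1
    obtain ⟨x, hx⟩ := Finset.card_eq_one.mp hu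
    refine ⟨x, x, x, fun v => ?_⟩
    have hv : v ∈ (Finset.univ : Finset V) := Finset.mem_univ v
    rw [hx, Finset.mem_singleton] at hv
    exact Or.inl hv
  · have hu : (Finset.univ : Finset V).card = 2 := by rw [Finset.card_univ]; exact h2
    obtain ⟨x, y, _, hxy⟩ := Finset.card_eq_two.mp hu
    refine ⟨x, y, y, fun v => ?_⟩
    have hv : v ∈ (Finset.univ : Finset V) := Finset.mem_univ v
    rw [hxy] at hv
    simp only [Finset.mem_insert, Finset.mem_singleton] at hv
    tauto
  · have hu : (Finset.univ : Finset V).card = 3 := by rw [Finset.card_univ]; exact h3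
    obtain ⟨x, y, z, _, _, _, hxyz⟩ := Finset.card_eq_three.mp hu
    refine ⟨x, y, z, fun v => ?_⟩
    have hv : v ∈ (Finset.univ : Finset V) := Finset.mem_univ v
    rw [hxyz] at hv
    simp only [Finset.mem_insert, Finset.mem_singleton] at hv
    tauto

lemma enum4 {V : Type*} [Fintype V] (h : Fintype.card V = 4) :
    ∃ a b c d : V, a ≠ b ∧ a ≠ c ∧ a ≠ d ∧ b ≠ c ∧ b ≠ d ∧ c ≠ d ∧
      ∀ v : V, v = a ∨ v = b ∨ v = c ∨ v = d := by
  have e : V ≃ Fin 4 := Fintype.equivFinOfCardEq h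
  have hfin : ∀ i : Fin 4, i = 0 ∨ i = 1 ∨ i = 2 ∨ i = 3 := by decide
  refine ⟨e.symm 0, e.symm 1, e.symm 2, e.symm 3, ?_, ?_, ?_, ?_, ?_, ?_, fun v => ?_⟩
  · intro h'; exact absurd (e.symm.injective h') (by decide)
  · intro h'; exact absurd (e.symm.injective h') (by decide)
  · intro h'; exact absurd (e.symm.injective h') (by decide)
  · intro h'; exact absurd (e.symm.injective h') (by decide)
  · intro h'; exact absurd (e.symm.injective h') (by decide)
  · intro h'; exact absurd (e.symm.injective h') (by decide)
  · have hv : v = e.symm (e v) := (e.symm_apply_apply v).symm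
    rcases hfin (e v) with h' | h' | h' | h'
    · left; rw [hv, h']
    · right; left; rw [hv, h']
    · right; right; left; rw [hv, h']
    · right; right; right; rw [hv, h']

end Aux

end PeriodicGraph

/-- Every 3-copwin periodic graph has at least five vertices;
equivalently, a periodic graph on at most four vertices has cop number at
most 2. -/
theorem copNumber_le_two_of_card_le_four {V : Type*} [Fintype V] [Nonempty V]
    (hV : Fintype.card V ≤ 4) (𝒢 : PeriodicGraph V)
    (hconn : 𝒢.footprint.Connected) :
    𝒢.copNumber ≤ 2 := by
  classical
  have hwin : 𝒢.CopsWin 2 := by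
    by_cases hc4 : Fintype.card V = 4
    · by_cases hnadj : ∃ u v : V, u ≠ v ∧ ¬𝒢.footprint.Adj u v
      · obtain ⟨u, v, huv, hnad⟩ := hnadj
        have hF : (Finset.univ \ {u, v} : Finset V).card = 2 := by
          rw [Finset.card_sdiff_of_subset (Finset.subset_univ _), Finset.card_univ, hc4,
            Finset.card_insert_of_notMem (by simpa using huv), Finset.card_singleton]
        obtain ⟨x, y, hxy, hFxy⟩ := Finset.card_eq_two.mp hF
        apply PeriodicGraph.copsWin_of_pinned 𝒢 hconn x y
        intro w hwx hwy z hz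
        have hw : w = u ∨ w = v := by
          by_contra hcon
          push_neg at hcon
          have hmem : w ∈ (Finset.univ \ ({u, v} : Finset V)) := by
            simp [Finset.mem_sdiff, hcon.1, hcon.2]
          rw [hFxy] at hmem
          simp only [Finset.mem_insert, Finset.mem_singleton] at hmem
          tauto
        have hzu : z ≠ u ∧ z ≠ v := by
          constructor <;> rintro rfl
          · rcases hw with rfl | rfl
            · exact 𝒢.footprint.irrefl hz
            · exact hnad hz.symm
          · rcases hw with rfl | rfl
            · exact hnad hz
            · exact 𝒢.footprint.irrefl hz
        have hmem : z ∈ (Finset.univ \ ({u, v} : Finset V)) := by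
          simp [Finset.mem_sdiff, hzu.1, hzu.2]
        rw [hFxy] at hmem
        simpa using hmem
      · push_neg at hnadj
        obtain ⟨a, b, c, d, hab, hac, had, hbc, hbd, hcd, huniv⟩ := PeriodicGraph.enum4 hc4
        exact PeriodicGraph.copsWin_of_complete 𝒢 a b c d hab hac had hbc hbd hcd huniv hnadj
    · have h3 : Fintype.card V ≤ 3 := by omega
      obtain ⟨x, y, z, hcov⟩ := PeriodicGraph.cover3 h3
      apply PeriodicGraph.copsWin_of_pinned 𝒢 hconn x y
      intro w hwx hwy u hu
      have hwz : w = z := by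
        rcases hcov w with h | h | h
        exacts [absurd h hwx, absurd h hwy, h]
      have huz : u ≠ z := by
        rintro rfl
        rw [hwz] at hu
        exact 𝒢.footprint.irrefl hu
      rcases hcov u with h | h | h
      · exact Or.inl h
      · exact Or.inr h
      · exact absurd h huz
  exact Nat.sInf_le hwin
end

section
/- For any k ≥ 3 and 1 ≤ k' < k, if there exists a graph G with c(G) = k having a connected spanning subgraph H with c(H) = k', then there exists a periodic graph 𝒢 with footprint G such that c(𝒢) ≤ k' and c(G) = k. -/
section Aux

open PeriodicGraph

/-- König-type compactness for predicates on sequences over a finite alphabet. -/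
lemma koenig_aux {V : Type*} [Finite V] (P : ℕ → (ℕ → V) → Prop)
    (hmono : ∀ m n b, m ≤ n → P n b → P m b)
    (hdep : ∀ n b c, (∀ t ≤ n, b t = c t) → P n b → P n c)
    (hne : ∀ n, ∃ b, P n b) : ∃ b, ∀ n, P n b := by
  letI : TopologicalSpace V := ⊥
  haveI : DiscreteTopology V := ⟨rfl⟩
  set Z : ℕ → Set (ℕ → V) := fun n => {b | P n b} with hZ
  have hclosed : ∀ n, IsClosed (Z n) := by
    intro n
    rw [← isOpen_compl_iff, isOpen_iff_mem_nhds]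
    intro b hb
    refine mem_nhds_iff.2 ⟨⋂ t ∈ Finset.range (n+1), (fun c : ℕ → V => c t) ⁻¹' {b t},
      ?_, ?_, ?_⟩
    · intro c hc
      simp only [Set.mem_iInter, Set.mem_preimage, Set.mem_singleton_iff] at hc
      intro hcZ
      exact hb (hdep n c b (fun t ht => hc t (Finset.mem_range.2 (Nat.lt_succ_of_le ht))) hcZ)
    · exact isOpen_biInter_finset fun t _ =>
        (continuous_apply t).isOpen_preimage _ (isOpen_discrete _)
    · simp
  have hdir : Directed (· ⊇ ·) Z := fun m n =>
    ⟨max m n, fun b hb => show P m b from hmono m (max m n) b (le_max_left m n) (show P _ b from hb),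
      fun b hb => show P n b from hmono n (max m n) b (le_max_right m n) (show P _ b from hb)⟩
  obtain ⟨b, hb⟩ := IsCompact.nonempty_iInter_of_directed_nonempty_isCompact_isClosed Z hdir
    (fun n => hne n) (fun n => (hclosed n).isCompact) hclosed
  exact ⟨b, fun n => Set.mem_iInter.1 hb n⟩

/-- The cop positions determined by a cop strategy and a sequence of robber positions. -/
def cseq {V : Type*} {k : ℕ} (init : Fin k → V)
    (mv : ℕ → (Fin k → V) → V → (Fin k → V)) (b : ℕ → V) : ℕ → Fin k → V
  | 0 => init
  | t + 1 => mv t (cseq init mv b t) (b t)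

lemma cseq_congr {V : Type*} {k : ℕ} (init : Fin k → V)
    (mv : ℕ → (Fin k → V) → V → (Fin k → V)) (b c : ℕ → V) (n : ℕ)
    (h : ∀ t < n, b t = c t) : cseq init mv b n = cseq init mv c n := by
  induction n with
  | zero => rfl
  | succ n ih =>
    show mv n (cseq init mv b n) (b n) = mv n (cseq init mv c n) (c n)
    rw [ih (fun t ht => h t (ht.trans (Nat.lt_succ_self n))), h n (Nat.lt_succ_self n)]

/-- A winning cop strategy on a static graph captures every legal robber within a
uniform time bound. -/
lemma uniform_bound {V : Type*} [Fintype V] {k : ℕ} (H : SimpleGraph V)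
    (σ : CopStrategy (ofStatic H) k)
    (hσwin : ∀ ρ : RobStrategy (ofStatic H) k, ρ.Legal → Captured σ ρ) :
    ∃ T : ℕ, ∀ ρ : RobStrategy (ofStatic H) k, ρ.Legal →
      ∃ t ≤ T, ∃ i, ((play σ ρ t).1 i = (play σ ρ t).2 ∨
        (play σ ρ (t+1)).1 i = (play σ ρ t).2) := by
  classical
  by_contra hcon
  push_neg at hcon
  set P : ℕ → (ℕ → V) → Prop := fun n b =>
    (∀ t < n, b (t+1) ∈ cN H (b t)) ∧
    (∀ t ≤ n, ∀ i, cseq σ.init σ.move b t i ≠ b t ∧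
      σ.move t (cseq σ.init σ.move b t) (b t) i ≠ b t) with hP
  have hmono : ∀ m n b, m ≤ n → P n b → P m b := by
    intro m n b hmn ⟨h1, h2⟩
    exact ⟨fun t ht => h1 t (ht.trans_le hmn), fun t ht => h2 t (ht.trans hmn)⟩
  have hdep : ∀ n b c, (∀ t ≤ n, b t = c t) → P n b → P n c := by
    intro n b c hbc ⟨h1, h2⟩
    constructor
    · intro t ht
      rw [← hbc (t+1) (Nat.succ_le_of_lt ht), ← hbc t (le_of_lt ht)]
      exact h1 t ht
    · intro t ht i
      have hcs : cseq σ.init σ.move c t = cseq σ.init σ.move b t :=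
        cseq_congr _ _ _ _ t (fun s hs => (hbc s (le_of_lt (hs.trans_le ht))).symm)
      rw [hcs, ← hbc t ht]
      exact h2 t ht i
  have hne : ∀ n, ∃ b, P n b := by
    intro n
    obtain ⟨ρ, hρleg, hsurv⟩ := hcon n
    refine ⟨fun t => (play σ ρ t).2, ?_, ?_⟩
    · intro t _
      exact hρleg t _ _
    · intro t ht i
      have hcs : ∀ s, cseq σ.init σ.move (fun t => (play σ ρ t).2) s = (play σ ρ s).1 := by
        intro s
        induction s with
        | zero => rfl
        | succ s ih =>
          show σ.move s _ _ = _
          rw [ih]; rfl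
      have := hsurv t ht i
      rw [hcs]
      exact ⟨this.1, this.2⟩
  obtain ⟨b, hb⟩ := koenig_aux P hmono hdep hne
  let ρ : RobStrategy (ofStatic H) k :=
    ⟨fun _ => b 0, fun t _ r => if r = b t then b (t+1) else r⟩
  have hρleg : ρ.Legal := by
    intro t c r
    show (if r = b t then b (t+1) else r) ∈ cN H r
    by_cases h : r = b t
    · rw [if_pos h, h]
      exact (hb (t+1)).1 t (Nat.lt_succ_self t)
    · rw [if_neg h]
      exact Set.mem_insert r _
  have hplay : ∀ t, play σ ρ t = (cseq σ.init σ.move b t, b t) := by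
    intro t
    induction t with
    | zero => rfl
    | succ t ih =>
      show (σ.move t (play σ ρ t).1 (play σ ρ t).2,
        ρ.move t _ (play σ ρ t).2) = _
      rw [ih]
      refine Prod.ext rfl ?_
      show (if b t = b t then b (t+1) else b t) = b (t+1)
      rw [if_pos rfl]
  obtain ⟨t, i, hcap⟩ := hσwin ρ hρleg
  rcases hcap with h | h
  · rw [hplay t] at h
    exact ((hb t).2 t le_rfl i).1 h
  · rw [hplay (t+1), hplay t] at h
    exact ((hb t).2 t le_rfl i).2 h

end Aux

/-- If a graph `G` with `c(G) = k` (for `k ≥ 3`) has a connected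
spanning subgraph `H` with `c(H) = k'` (for `1 ≤ k' < k`), then there is a
periodic graph with footprint `G` whose cop number is at most `k'`. -/
theorem exists_pg_low_copNumber_of_spanning_subgraph {V : Type*} [Fintype V]
    (k k' : ℕ) (hk : 3 ≤ k) (hk' : 1 ≤ k') (hkk : k' < k)
    (G H : SimpleGraph V) (hle : H ≤ G) (hconn : H.Connected)
    (hcG : copNumberS G = k) (hcH : copNumberS H = k') :
    ∃ 𝒢 : PeriodicGraph V, 𝒢.footprint = G ∧ 𝒢.copNumber ≤ k' := by
  classical
  -- k' cops win on the static graph H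
  have hSne : {k | (PeriodicGraph.ofStatic H).CopsWin k}.Nonempty := by
    by_contra h
    rw [Set.not_nonempty_iff_eq_empty] at h
    have h0 : copNumberS H = 0 := by
      unfold copNumberS PeriodicGraph.copNumber
      rw [show {k | (PeriodicGraph.ofStatic H).CopsWin k} = ∅ from h, Nat.sInf_empty]
    omega
  have hwin : (PeriodicGraph.ofStatic H).CopsWin k' := by
    have hmem := Nat.sInf_mem hSne
    have : copNumberS H ∈ {k | (PeriodicGraph.ofStatic H).CopsWin k} := hmem
    rwa [hcH] at this
  obtain ⟨σ, hσleg, hσwin⟩ := hwin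
  obtain ⟨T, hT⟩ := uniform_bound H σ hσwin
  let 𝒢 : PeriodicGraph V :=
    { p := T + 2
      p_pos := by omega
      snap := fun t => if t % (T + 2) ≤ T then H else G
      periodic := fun t => by simp [Nat.add_mod_right] }
  have hsnap : ∀ t ≤ T, 𝒢.snap t = H := by
    intro t ht
    show (if t % (T + 2) ≤ T then H else G) = H
    rw [Nat.mod_eq_of_lt (by omega), if_pos ht]
  refine ⟨𝒢, ?_, ?_⟩
  · -- footprint = G
    apply le_antisymm
    · apply iSup_le
      intro t
      show (if t % (T + 2) ≤ T then H else G) ≤ G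
      split
      · exact hle
      · exact le_rfl
    · have h1 : 𝒢.snap (T + 1) = G := by
        show (if (T + 1) % (T + 2) ≤ T then H else G) = G
        rw [Nat.mod_eq_of_lt (by omega), if_neg (by omega)]
      calc G = 𝒢.snap (T + 1) := h1.symm
        _ ≤ ⨆ t, 𝒢.snap t := le_iSup _ (T + 1)
  · -- copNumber ≤ k'
    apply Nat.sInf_le
    show 𝒢.CopsWin k'
    refine ⟨⟨σ.init, fun t c r => if t ≤ T then σ.move t c r else c⟩, ?_, ?_⟩
    · -- legality
      intro t c r i
      by_cases h : t ≤ T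
      · show (if t ≤ T then σ.move t c r else c) i ∈ cN (𝒢.snap t) (c i)
        rw [if_pos h, hsnap t h]
        exact hσleg t c r i
      · show (if t ≤ T then σ.move t c r else c) i ∈ cN (𝒢.snap t) (c i)
        rw [if_neg h]
        exact Set.mem_insert _ _
    · intro ρ hρleg
      -- transfer robber strategy to the static graph H
      let ρ' : PeriodicGraph.RobStrategy (PeriodicGraph.ofStatic H) k' :=
        ⟨ρ.init, fun t c r => if t ≤ T then ρ.move t c r else r⟩
      have hρ'leg : ρ'.Legal := by
        intro t c r
        show (if t ≤ T then ρ.move t c r else r) ∈ cN H r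
        by_cases h : t ≤ T
        · rw [if_pos h, ← hsnap t h]
          exact hρleg t c r
        · rw [if_neg h]
          exact Set.mem_insert _ _
      -- with σ' on 𝒢 and σ on H the plays coincide up to time T+1
      let σ' : PeriodicGraph.CopStrategy 𝒢 k' :=
        ⟨σ.init, fun t c r => if t ≤ T then σ.move t c r else c⟩
      have hplay : ∀ t ≤ T + 1, PeriodicGraph.play σ' ρ t = PeriodicGraph.play σ ρ' t := by
        intro t ht
        induction t with
        | zero => rfl
        | succ t ih =>
          have ht' : t ≤ T := by omega
          have ih' := ih (by omega)
          have e1 : ∀ c r, σ'.move t c r = σ.move t c r := fun c r => if_pos ht'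
          have e2 : ∀ c r, ρ'.move t c r = ρ.move t c r := fun c r => if_pos ht'
          show (σ'.move t (PeriodicGraph.play σ' ρ t).1 (PeriodicGraph.play σ' ρ t).2,
              ρ.move t (σ'.move t (PeriodicGraph.play σ' ρ t).1 (PeriodicGraph.play σ' ρ t).2)
                (PeriodicGraph.play σ' ρ t).2) =
            (σ.move t (PeriodicGraph.play σ ρ' t).1 (PeriodicGraph.play σ ρ' t).2,
              ρ'.move t (σ.move t (PeriodicGraph.play σ ρ' t).1 (PeriodicGraph.play σ ρ' t).2)
                (PeriodicGraph.play σ ρ' t).2)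
          rw [ih', e1, e2]
      obtain ⟨t, ht, i, hcap⟩ := hT ρ' hρ'leg
      refine ⟨t, i, ?_⟩
      rw [hplay t (by omega), hplay (t + 1) (by omega)]
      exact hcap
end

section
/- There exists a copwin periodic graph whose footprint is the Petersen graph (which is 3-copwin). In particular, there is a periodic sequence of spanning subgraphs of the Petersen graph, with union equal to the Petersen graph, on which a single cop can capture the robber. -/
/-- The Petersen graph, on vertex set `ZMod 5 × Bool` (`false` = outer 5-cycle,
`true` = inner 5-cycle stepping by 2, with spokes joining them). -/
def petersen : SimpleGraph (ZMod 5 × Bool) :=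
  SimpleGraph.fromRel (fun x y =>
    (x.2 = false ∧ y.2 = false ∧ y.1 = x.1 + 1) ∨
    (x.2 = false ∧ y.2 = true ∧ x.1 = y.1) ∨
    (x.2 = true ∧ y.2 = true ∧ y.1 = x.1 + 2))


/-! ### Auxiliary material -/

section Aux

open PeriodicGraph

abbrev PV := ZMod 5 × Bool

instance petersenAdjDec : DecidableRel petersen.Adj := fun x y =>
  decidable_of_iff _ (SimpleGraph.fromRel_adj _ x y).symm

lemma mem_cN {V : Type*} (G : SimpleGraph V) (u v : V) :
    v ∈ cN G u ↔ v = u ∨ G.Adj u v := by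
  simp [cN, Set.mem_insert_iff, Set.mem_setOf_eq]

lemma self_mem_cN {V : Type*} (G : SimpleGraph V) (u : V) : u ∈ cN G u :=
  (mem_cN G u u).2 (Or.inl rfl)

abbrev Safe (c v : PV) : Prop := v ≠ c ∧ ¬ petersen.Adj c v

set_option maxHeartbeats 1000000 in
lemma D1 : ∀ c1 c2 : PV, ∃ v, Safe c1 v ∧ Safe c2 v := by decide

set_option maxHeartbeats 1000000 in
lemma D2 : ∀ (v c1 c2 : PV), c1 ≠ v → c2 ≠ v →
    ∃ u, (u = v ∨ petersen.Adj v u) ∧ Safe c1 u ∧ Safe c2 u := by decide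

/-- dominating set of the Petersen graph -/
def domset : Fin 3 → PV := ![((0 : ZMod 5), false), ((2 : ZMod 5), false), ((1 : ZMod 5), true)]

set_option maxHeartbeats 1000000 in
lemma D3 : ∀ v : PV, ∃ i : Fin 3, v = domset i ∨ petersen.Adj (domset i) v := by decide

/-! #### Three cops win on the static Petersen graph -/

def copσ3 : CopStrategy (PeriodicGraph.ofStatic petersen) 3 :=
  ⟨domset, fun _ c r i => if r = c i ∨ petersen.Adj (c i) r then r else c i⟩

lemma copswin3 : (PeriodicGraph.ofStatic petersen).CopsWin 3 := by
  refine ⟨copσ3, ?_, ?_⟩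
  · intro t c r i
    show (if r = c i ∨ petersen.Adj (c i) r then r else c i) ∈ _
    split
    · exact (mem_cN _ _ _).2 (by assumption)
    · exact self_mem_cN _ _
  · intro ρ hρ
    obtain ⟨i, hi⟩ := D3 ((play copσ3 ρ 0).2)
    refine ⟨0, i, Or.inr ?_⟩
    show (if (play copσ3 ρ 0).2 = (play copσ3 ρ 0).1 i ∨
        petersen.Adj ((play copσ3 ρ 0).1 i) ((play copσ3 ρ 0).2)
        then (play copσ3 ρ 0).2 else (play copσ3 ρ 0).1 i) = (play copσ3 ρ 0).2
    rw [if_pos]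
    exact hi

/-! #### Two cops do not win on the static Petersen graph -/

noncomputable def robρ2 : RobStrategy (PeriodicGraph.ofStatic petersen) 2 :=
  ⟨fun c => (D1 (c 0) (c 1)).choose,
   fun _ c r => if h : c 0 ≠ r ∧ c 1 ≠ r then (D2 r (c 0) (c 1) h.1 h.2).choose else r⟩

lemma robρ2_legal : robρ2.Legal := by
  intro t c r
  show (if h : c 0 ≠ r ∧ c 1 ≠ r then (D2 r (c 0) (c 1) h.1 h.2).choose else r) ∈ _
  by_cases h : c 0 ≠ r ∧ c 1 ≠ r
  · rw [dif_pos h]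
    rcases (D2 r (c 0) (c 1) h.1 h.2).choose_spec.1 with h' | h'
    · rw [h']; exact self_mem_cN _ _
    · exact (mem_cN _ _ _).2 (Or.inr h')
  · rw [dif_neg h]; exact self_mem_cN _ _

lemma notwin2 : ¬ (PeriodicGraph.ofStatic petersen).CopsWin 2 := by
  rintro ⟨σ, hleg, hwin⟩
  have inv : ∀ t, ∀ i, Safe ((play σ robρ2 t).1 i) ((play σ robρ2 t).2) := by
    intro t
    induction t with
    | zero =>
      intro i
      have h0 : play σ robρ2 0 = (σ.init, (D1 (σ.init 0) (σ.init 1)).choose) := rfl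
      rw [h0]
      obtain ⟨hs0, hs1⟩ := (D1 (σ.init 0) (σ.init 1)).choose_spec
      fin_cases i <;> assumption
    | succ t ih =>
      set c := (play σ robρ2 t).1 with hc
      set r := (play σ robρ2 t).2 with hr
      set c' := σ.move t c r with hc'
      have hne : ∀ i, c' i ≠ r := by
        intro i hEq
        have : c' i ∈ cN ((PeriodicGraph.ofStatic petersen).snap t) (c i) := hleg t c r i
        rw [hEq, mem_cN] at this
        rcases this with h | h
        · exact (ih i).1 h
        · exact (ih i).2 h
      have hplay : play σ robρ2 (t + 1) = (c', robρ2.move t c' r) := rfl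
      have hmove : robρ2.move t c' r = (D2 r (c' 0) (c' 1) (hne 0) (hne 1)).choose := by
        show (if h : c' 0 ≠ r ∧ c' 1 ≠ r then (D2 r (c' 0) (c' 1) h.1 h.2).choose else r) = _
        rw [dif_pos ⟨hne 0, hne 1⟩]
      obtain ⟨_, hs0, hs1⟩ := (D2 r (c' 0) (c' 1) (hne 0) (hne 1)).choose_spec
      intro i
      rw [hplay, hmove]
      fin_cases i <;> assumption
  rcases hwin robρ2 robρ2_legal with ⟨t, i, h | h⟩
  · exact (inv t i).1 h.symm
  · have hm := hleg t ((play σ robρ2 t).1) ((play σ robρ2 t).2) i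
    have h1 : (play σ robρ2 (t + 1)).1 i
        = σ.move t ((play σ robρ2 t).1) ((play σ robρ2 t).2) i := rfl
    rw [h1] at h
    rw [h, mem_cN] at hm
    rcases hm with h' | h'
    · exact (inv t i).1 h'
    · exact (inv t i).2 h'

noncomputable def robρ1 : RobStrategy (PeriodicGraph.ofStatic petersen) 1 :=
  ⟨fun c => (D1 (c 0) (c 0)).choose,
   fun _ c r => if h : c 0 ≠ r then (D2 r (c 0) (c 0) h h).choose else r⟩

lemma robρ1_legal : robρ1.Legal := by
  intro t c r
  show (if h : c 0 ≠ r then (D2 r (c 0) (c 0) h h).choose else r) ∈ _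
  by_cases h : c 0 ≠ r
  · rw [dif_pos h]
    rcases (D2 r (c 0) (c 0) h h).choose_spec.1 with h' | h'
    · rw [h']; exact self_mem_cN _ _
    · exact (mem_cN _ _ _).2 (Or.inr h')
  · rw [dif_neg h]; exact self_mem_cN _ _

lemma notwin1 : ¬ (PeriodicGraph.ofStatic petersen).CopsWin 1 := by
  rintro ⟨σ, hleg, hwin⟩
  have inv : ∀ t, ∀ i, Safe ((play σ robρ1 t).1 i) ((play σ robρ1 t).2) := by
    intro t
    induction t with
    | zero =>
      intro i
      have h0 : play σ robρ1 0 = (σ.init, (D1 (σ.init 0) (σ.init 0)).choose) := rfl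
      rw [h0]
      obtain ⟨hs0, hs1⟩ := (D1 (σ.init 0) (σ.init 0)).choose_spec
      fin_cases i <;> assumption
    | succ t ih =>
      set c := (play σ robρ1 t).1 with hc
      set r := (play σ robρ1 t).2 with hr
      set c' := σ.move t c r with hc'
      have hne : ∀ i, c' i ≠ r := by
        intro i hEq
        have : c' i ∈ cN ((PeriodicGraph.ofStatic petersen).snap t) (c i) := hleg t c r i
        rw [hEq, mem_cN] at this
        rcases this with h | h
        · exact (ih i).1 h
        · exact (ih i).2 h
      have hplay : play σ robρ1 (t + 1) = (c', robρ1.move t c' r) := rfl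
      have hmove : robρ1.move t c' r = (D2 r (c' 0) (c' 0) (hne 0) (hne 0)).choose := by
        show (if h : c' 0 ≠ r then (D2 r (c' 0) (c' 0) h h).choose else r) = _
        rw [dif_pos (hne 0)]
      obtain ⟨_, hs0, hs1⟩ := (D2 r (c' 0) (c' 0) (hne 0) (hne 0)).choose_spec
      intro i
      rw [hplay, hmove]
      fin_cases i <;> assumption
  rcases hwin robρ1 robρ1_legal with ⟨t, i, h | h⟩
  · exact (inv t i).1 h.symm
  · have hm := hleg t ((play σ robρ1 t).1) ((play σ robρ1 t).2) i
    have h1 : (play σ robρ1 (t + 1)).1 i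
        = σ.move t ((play σ robρ1 t).1) ((play σ robρ1 t).2) i := rfl
    rw [h1] at h
    rw [h, mem_cN] at hm
    rcases hm with h' | h'
    · exact (inv t i).1 h'
    · exact (inv t i).2 h'

lemma notwin0_any {V : Type*} (v : V) (𝒢 : PeriodicGraph V) : ¬ 𝒢.CopsWin 0 := by
  rintro ⟨σ, hleg, hwin⟩
  rcases hwin ⟨fun _ => v, fun _ _ r => r⟩ (fun t c r => self_mem_cN _ _) with ⟨t, i, _⟩
  exact i.elim0

lemma copNumberS_petersen : copNumberS petersen = 3 := by
  have h3 := copswin3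
  apply le_antisymm
  · exact Nat.sInf_le h3
  · apply le_csInf ⟨3, by exact h3⟩
    intro b hb
    by_contra hlt
    push_neg at hlt
    interval_cases b
    · exact notwin0_any ((0 : ZMod 5), false) _ hb
    · exact notwin1 hb
    · exact notwin2 hb

/-! #### The periodic graph: a Hamiltonian path shown for 9 rounds, then everything -/

/-- A Hamiltonian path of the Petersen graph. -/
def hp : Fin 10 → PV :=
  ![((0:ZMod 5), false), ((1:ZMod 5), false), ((2:ZMod 5), false), ((3:ZMod 5), false),
    ((4:ZMod 5), false), ((4:ZMod 5), true), ((1:ZMod 5), true), ((3:ZMod 5), true),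
    ((0:ZMod 5), true), ((2:ZMod 5), true)]

/-- The position of a vertex along the Hamiltonian path. -/
def idx (v : PV) : ℕ :=
  if v = ((0:ZMod 5), false) then 0 else if v = ((1:ZMod 5), false) then 1
  else if v = ((2:ZMod 5), false) then 2 else if v = ((3:ZMod 5), false) then 3
  else if v = ((4:ZMod 5), false) then 4 else if v = ((4:ZMod 5), true) then 5
  else if v = ((1:ZMod 5), true) then 6 else if v = ((3:ZMod 5), true) then 7
  else if v = ((0:ZMod 5), true) then 8 else 9

/-- The Hamiltonian path, as a spanning subgraph of the Petersen graph. -/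
def pathG : SimpleGraph PV := SimpleGraph.fromRel (fun x y => idx y = idx x + 1)

instance pathGAdjDec : DecidableRel pathG.Adj := fun x y =>
  decidable_of_iff _ (SimpleGraph.fromRel_adj _ x y).symm

set_option maxHeartbeats 1000000 in
lemma path_le : ∀ x y : PV, pathG.Adj x y → petersen.Adj x y := by decide

set_option maxHeartbeats 1000000 in
lemma idx_hp : ∀ i : Fin 10, idx (hp i) = i.val := by decide

set_option maxHeartbeats 1000000 in
lemma hp_of_idx : ∀ (v : PV) (i : Fin 10), idx v = i.val → v = hp i := by decide

set_option maxHeartbeats 1000000 in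
lemma idx_le9 : ∀ v : PV, idx v ≤ 9 := by decide

set_option maxHeartbeats 1000000 in
lemma idx_adj : ∀ x y : PV, pathG.Adj x y → (idx x = idx y + 1 ∨ idx y = idx x + 1) := by decide

set_option maxHeartbeats 1000000 in
lemma hp_step : ∀ i : Fin 9, pathG.Adj (hp i.castSucc) (hp i.succ) := by decide

/-- The periodic graph: nine rounds of the Hamiltonian path, then one round of
the full Petersen graph. -/
def PG : PeriodicGraph PV where
  p := 10
  p_pos := by norm_num
  snap t := if t % 10 = 9 then petersen else pathG
  periodic t := by simp only [Nat.add_mod_right]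

lemma PG_snap (t : ℕ) : PG.snap t = if t % 10 = 9 then petersen else pathG := rfl

lemma path_le_snap (t : ℕ) : pathG ≤ PG.snap t := by
  rw [PG_snap]
  split
  · exact fun x y h => path_le x y h
  · exact le_refl _

lemma PG_footprint : PG.footprint = petersen := by
  apply le_antisymm
  · apply iSup_le
    intro t
    rw [PG_snap]
    split
    · exact le_refl _
    · exact fun x y h => path_le x y h
  · have h9 : PG.snap 9 = petersen := by rw [PG_snap]; norm_num
    calc petersen = PG.snap 9 := h9.symm
      _ ≤ ⨆ t, PG.snap t := le_iSup _ 9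

lemma min8_lt10 (t : ℕ) : min t 8 < 10 :=
  Nat.lt_succ_of_le (Nat.le_succ_of_le (min_le_right t 8))

lemma min8_succ_lt10 (t : ℕ) : min t 8 + 1 < 10 :=
  Nat.succ_lt_succ (Nat.lt_succ_of_le (min_le_right t 8))

/-- The single cop walks along the Hamiltonian path. -/
def copσPG : PeriodicGraph.CopStrategy PG 1 :=
  ⟨fun _ => hp 0,
   fun t c _ i => if c i = hp ⟨min t 8, min8_lt10 t⟩
      then hp ⟨min t 8 + 1, min8_succ_lt10 t⟩ else c i⟩

set_option maxHeartbeats 800000 in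
lemma copσPG_legal : copσPG.Legal := by
  intro t c r i
  show (if c i = hp ⟨min t 8, min8_lt10 t⟩
      then hp ⟨min t 8 + 1, min8_succ_lt10 t⟩ else c i) ∈ _
  by_cases h : c i = hp ⟨min t 8, min8_lt10 t⟩
  · rw [if_pos h, h]
    exact (mem_cN _ _ _).2 (Or.inr (path_le_snap t (hp_step ⟨min t 8,
      Nat.lt_succ_of_le (min_le_right t 8)⟩)))
  · rw [if_neg h]
    exact self_mem_cN _ _

set_option maxHeartbeats 800000 in
lemma PG_copswin1 : PG.CopsWin 1 := by
  refine ⟨copσPG, copσPG_legal, ?_⟩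
  intro ρ hρ
  by_contra hcap
  -- invariant: as long as the path phase lasts, the cop is at `hp t` and the
  -- robber is strictly further along the path
  have inv : ∀ t, t ≤ 9 →
      idx ((PeriodicGraph.play copσPG ρ t).1 0) = t ∧
      t + 1 ≤ idx ((PeriodicGraph.play copσPG ρ t).2) := by
    intro t
    induction t with
    | zero =>
      intro _
      constructor
      · show idx (hp 0) = 0
        exact idx_hp 0
      · by_contra hlt
        push_neg at hlt
        apply hcap
        refine ⟨0, 0, Or.inl ?_⟩
        have h0 : idx ((PeriodicGraph.play copσPG ρ 0).2) = (0 : Fin 10).val := by omega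
        rw [hp_of_idx _ 0 h0]
        rfl
    | succ t ih =>
      intro ht9
      have ht8 : t ≤ 8 := by omega
      obtain ⟨hc, hr⟩ := ih (by omega)
      set c := (PeriodicGraph.play copσPG ρ t).1 with hcdef
      set r := (PeriodicGraph.play copσPG ρ t).2 with hrdef
      have pf_t : t < 10 := Nat.lt_succ_of_le (Nat.le_succ_of_le ht8)
      have pf_t1 : t + 1 < 10 := Nat.succ_lt_succ (Nat.lt_succ_of_le ht8)
      -- cop's current position
      have hcop : c 0 = hp ⟨t, pf_t⟩ := hp_of_idx _ _ hc
      -- the cop's move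
      have hmin : min t 8 = t := min_eq_left ht8
      have efin : (⟨min t 8, min8_lt10 t⟩ : Fin 10) = ⟨t, pf_t⟩ := Fin.ext (by simp [hmin])
      have efin2 : (⟨min t 8 + 1, min8_succ_lt10 t⟩ : Fin 10) = ⟨t + 1, pf_t1⟩ :=
        Fin.ext (by simp [hmin])
      have hcond : ∀ i : Fin 1, c i = hp ⟨min t 8, min8_lt10 t⟩ := by
        intro i
        rw [Subsingleton.elim i 0, hcop]
        exact (congrArg hp efin).symm
      have hmove : ∀ i, copσPG.move t c r i = hp ⟨t + 1, pf_t1⟩ := by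
        intro i
        show (if c i = hp ⟨min t 8, min8_lt10 t⟩
            then hp ⟨min t 8 + 1, min8_succ_lt10 t⟩ else c i) = _
        rw [if_pos (hcond i)]
        exact congrArg hp efin2
      have hplay1 : (PeriodicGraph.play copσPG ρ (t+1)).1 = copσPG.move t c r := rfl
      have hplay2 : (PeriodicGraph.play copσPG ρ (t+1)).2 = ρ.move t (copσPG.move t c r) r := rfl
      constructor
      · rw [hplay1, hmove 0]
        exact idx_hp _
      · -- robber analysis
        have hrne : idx r ≠ t + 1 := by
          intro hEq
          apply hcap
          refine ⟨t, 0, Or.inr ?_⟩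
          rw [hplay1, hmove 0]
          exact (hp_of_idx r ⟨t+1, pf_t1⟩ hEq).symm
        have hr2 : t + 2 ≤ idx r := by omega
        -- robber's move is along the path snapshot
        have hsnap : PG.snap t = pathG := by
          rw [PG_snap, if_neg]
          omega
        have hleg := hρ t (copσPG.move t c r) r
        rw [mem_cN, hsnap] at hleg
        have hub : t + 1 ≤ idx ((PeriodicGraph.play copσPG ρ (t+1)).2) := by
          rw [hplay2]
          rcases hleg with h | h
          · rw [h]; omega
          · rcases idx_adj _ _ h.symm with h' | h' <;> omega
        rcases Nat.lt_or_ge (t + 1) (idx ((PeriodicGraph.play copσPG ρ (t+1)).2)) with h | h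
        · omega
        · exfalso
          apply hcap
          refine ⟨t + 1, 0, Or.inl ?_⟩
          rw [hplay1, hmove 0]
          have : idx ((PeriodicGraph.play copσPG ρ (t+1)).2) = (⟨t+1, pf_t1⟩ : Fin 10).val := by
            simp only [Fin.val]
            omega
          exact (hp_of_idx _ ⟨t+1, pf_t1⟩ this).symm
  have h1 := (inv 9 le_rfl).2
  have h2 := idx_le9 ((PeriodicGraph.play copσPG ρ 9).2)
  omega

lemma PG_copNumber : PG.copNumber = 1 := by
  apply le_antisymm
  · exact Nat.sInf_le (by exact PG_copswin1)
  · apply le_csInf ⟨1, by exact PG_copswin1⟩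
    intro b hb
    rcases Nat.eq_zero_or_pos b with h | h
    · subst h
      exact absurd hb (notwin0_any ((0 : ZMod 5), false) _)
    · exact h

end Aux

/-- The Petersen graph is 3-copwin, yet there exists a copwin
periodic graph whose footprint is the Petersen graph. -/
theorem exists_copwin_pg_petersen_footprint :
    copNumberS petersen = 3 ∧
    ∃ 𝒢 : PeriodicGraph (ZMod 5 × Bool),
      𝒢.footprint = petersen ∧ 𝒢.copNumber = 1 := by
  exact ⟨copNumberS_petersen, PG, PG_footprint, PG_copNumber⟩
end

section
/- If a periodic graph 𝒢 contains ℓ consecutive snapshots all equal to a fixed spanning tree T, with ℓ ≥ r(T) where r(T) = min_{x∈V} max_{y∈V} d_T(x,y), then c(𝒢) = 1 (a single cop can capture the robber). -/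
section TreeAux

open SimpleGraph

variable {V : Type*} {T : SimpleGraph V}

private lemma tree_path_length (hT : T.IsTree) {u v : V} {p : T.Walk u v} (hp : p.IsPath) :
    p.length = T.dist u v := by
  obtain ⟨q, hq, hql⟩ := hT.isConnected.exists_path_of_dist u v
  rw [(hT.existsUnique_path u v).unique hp hq, hql]

private lemma isPath_concat' {u v w : V} {p : T.Walk u v} (hp : p.IsPath)
    (hw : w ∉ p.support) (h : T.Adj v w) : (p.concat h).IsPath := by
  rw [← Walk.isPath_reverse_iff, Walk.reverse_concat]
  exact hp.reverse.cons (by simpa [Walk.support_reverse] using hw)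

private lemma dist_add_of_mem_path (hT : T.IsTree) {u v c : V} {p : T.Walk u v}
    (hp : p.IsPath) (hc : c ∈ p.support) :
    T.dist u c + T.dist c v = T.dist u v := by
  classical
  rw [← tree_path_length hT hp, ← tree_path_length hT (hp.takeUntil hc),
      ← tree_path_length hT (hp.dropUntil hc), ← Walk.length_append, Walk.take_spec]

private lemma tree_adj_dist (hT : T.IsTree) {r r' : V} (h : T.Adj r r') (z : V) :
    T.dist z r' = T.dist z r + 1 ∨ T.dist z r' + 1 = T.dist z r := by
  obtain ⟨p, hp, hl⟩ := hT.isConnected.exists_path_of_dist z r'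
  have h1 : T.dist r r' = 1 := SimpleGraph.dist_eq_one_iff_adj.mpr h
  by_cases hr : r ∈ p.support
  · left
    have := dist_add_of_mem_path hT hp hr
    omega
  · right
    have := tree_path_length hT (isPath_concat' hp hr h.symm)
    rw [Walk.length_concat, hl] at this
    exact this

private lemma tree_step_toward (hT : T.IsTree) {z r r' c : V} (h : T.Adj r r')
    (hd : T.dist z r' + 1 = T.dist z r) (hc : c ≠ r)
    (hsum : T.dist z c + T.dist c r = T.dist z r) :
    T.dist z c + T.dist c r' = T.dist z r' := by
  obtain ⟨p', hp', hl'⟩ := hT.isConnected.exists_path_of_dist z r'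
  have h1 : T.dist r r' = 1 := SimpleGraph.dist_eq_one_iff_adj.mpr h
  have hr : r ∉ p'.support := by
    intro hr
    have := dist_add_of_mem_path hT hp' hr
    have h2 : T.dist r r' = 1 := h1
    omega
  have hppath : (p'.concat h.symm).IsPath := isPath_concat' hp' hr h.symm
  obtain ⟨q1, hq1⟩ := (hT.isConnected z c).exists_walk_length_eq_dist
  obtain ⟨q2, hq2⟩ := (hT.isConnected c r).exists_walk_length_eq_dist
  have hw : (q1.append q2).length = T.dist z r := by
    rw [Walk.length_append]; omega
  have hwp := Walk.isPath_of_length_eq_dist _ hw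
  have heq : q1.append q2 = p'.concat h.symm :=
    (hT.existsUnique_path z r).unique hwp hppath
  have hcmem : c ∈ (p'.concat h.symm).support := by
    rw [← heq]
    exact (Walk.mem_support_append_iff _ _).mpr (Or.inl q1.end_mem_support)
  have hcp' : c ∈ p'.support := by
    rw [Walk.support_concat] at hcmem
    rw [List.mem_append] at hcmem
    rcases hcmem with h' | h'
    · exact h'
    · simp at h'; exact absurd h' hc
  exact dist_add_of_mem_path hT hp' hcp'

private lemma exists_tree_step (hT : T.IsTree) {u r : V} (hne : u ≠ r) :
    ∃ v, T.Adj u v ∧ T.dist v r + 1 = T.dist u r := by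
  have hpos : 0 < T.dist u r := hT.isConnected.pos_dist_of_ne hne
  obtain ⟨p, hp⟩ := (hT.isConnected u r).exists_walk_length_eq_dist
  cases p with
  | nil => exact absurd rfl hne
  | @cons _ v _ h q =>
    refine ⟨v, h, ?_⟩
    have h1 : T.dist v r ≤ q.length := SimpleGraph.dist_le q
    have h2 : T.dist u r ≤ T.dist u v + T.dist v r := hT.isConnected.dist_triangle
    have h3 : T.dist u v = 1 := SimpleGraph.dist_eq_one_iff_adj.mpr h
    rw [Walk.length_cons] at hp
    omega

end TreeAux

/-- If `𝒢` contains `ℓ` consecutive snapshots all equal to a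
fixed spanning tree `T` with `ℓ ≥ r(T)` (i.e. some vertex of `T` has
eccentricity at most `ℓ`), then a single cop can capture the robber. -/
theorem copwin_of_long_tree_interval {V : Type*} [Fintype V] [Nonempty V]
    (𝒢 : PeriodicGraph V) (T : SimpleGraph V) (hT : T.IsTree)
    (ℓ t0 : ℕ) (hsnap : ∀ s, s < ℓ → 𝒢.snap (t0 + s) = T)
    (hrad : ∃ x : V, ∀ y : V, T.dist x y ≤ ℓ) :
    𝒢.copNumber = 1 := by
  classical
  obtain ⟨x, hx⟩ := hrad
  have hconn := hT.isConnected
  have hstep0 : ∀ u r : V, ∃ v, v ∈ cN T u ∧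
      (u ≠ r → T.Adj u v ∧ T.dist v r + 1 = T.dist u r) := by
    intro u r
    by_cases h : u = r
    · exact ⟨u, Set.mem_insert _ _, fun h' => absurd h h'⟩
    · obtain ⟨v, hv1, hv2⟩ := exists_tree_step hT h
      exact ⟨v, Set.mem_insert_of_mem _ hv1, fun _ => ⟨hv1, hv2⟩⟩
  choose step hstep1 hstep2 using hstep0
  have hsnapT : ∀ t, t0 ≤ t → t < t0 + ℓ → 𝒢.snap t = T := by
    intro t h1 h2
    have := hsnap (t - t0) (by omega)
    rwa [Nat.add_sub_cancel' h1] at this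
  have hwin1 : 𝒢.CopsWin 1 := by
    refine ⟨⟨fun _ => x,
      fun t c r i => if t0 ≤ t ∧ t < t0 + ℓ then step (c i) r else c i⟩, ?_, ?_⟩
    · intro t c r i
      simp only
      split_ifs with h
      · rw [hsnapT t h.1 h.2]; exact hstep1 _ _
      · exact Set.mem_insert _ _
    · intro ρ hρ
      by_contra hcap
      simp only [PeriodicGraph.Captured, not_exists, not_or] at hcap
      set σ : 𝒢.CopStrategy 1 := ⟨fun _ => x,
        fun t c r i => if t0 ≤ t ∧ t < t0 + ℓ then step (c i) r else c i⟩ with hσ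
      have hstatic : ∀ t, t ≤ t0 → (PeriodicGraph.play σ ρ t).1 = fun _ => x := by
        intro t
        induction t with
        | zero => intro _; rfl
        | succ n ih =>
          intro hn
          have hn' : n ≤ t0 := by omega
          show σ.move n (PeriodicGraph.play σ ρ n).1 (PeriodicGraph.play σ ρ n).2 = _
          funext i
          show (if t0 ≤ n ∧ n < t0 + ℓ then _ else _) = x
          rw [if_neg (by omega)]
          simp [ih hn']
      have key : ∀ k, k ≤ ℓ →
          T.dist x ((PeriodicGraph.play σ ρ (t0 + k)).1 0) = k ∧
          T.dist x ((PeriodicGraph.play σ ρ (t0 + k)).1 0) +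
            T.dist ((PeriodicGraph.play σ ρ (t0 + k)).1 0)
              ((PeriodicGraph.play σ ρ (t0 + k)).2) =
          T.dist x ((PeriodicGraph.play σ ρ (t0 + k)).2) := by
        intro k
        induction k with
        | zero =>
          intro _
          have h0 : (PeriodicGraph.play σ ρ (t0 + 0)).1 = fun _ => x := hstatic t0 le_rfl
          rw [h0]
          simp [SimpleGraph.dist_self]
        | succ k ih =>
          intro hk
          obtain ⟨ih1, ih2⟩ := ih (by omega)
          set c := (PeriodicGraph.play σ ρ (t0 + k)).1 0 with hcdef
          set r := (PeriodicGraph.play σ ρ (t0 + k)).2 with hrdef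
          have hcr : c ≠ r := (hcap (t0 + k) 0).1
          have hcond : t0 ≤ t0 + k ∧ t0 + k < t0 + ℓ := ⟨by omega, by omega⟩
          have hmove : (PeriodicGraph.play σ ρ (t0 + (k + 1))).1 = fun _ => step c r := by
            show σ.move (t0 + k) (PeriodicGraph.play σ ρ (t0 + k)).1
              (PeriodicGraph.play σ ρ (t0 + k)).2 = _
            funext i
            show (if t0 ≤ t0 + k ∧ t0 + k < t0 + ℓ
              then step ((PeriodicGraph.play σ ρ (t0 + k)).1 i) r else _) = _
            rw [if_pos hcond, Fin.eq_zero i]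
          have hc'ne : step c r ≠ r := by
            have h2 := (hcap (t0 + k) 0).2
            have hmove' : (PeriodicGraph.play σ ρ (t0 + k + 1)).1 = fun _ => step c r := hmove
            rw [hmove'] at h2
            exact h2
          obtain ⟨hadj, hdist⟩ := hstep2 c r hcr
          have hcc' : T.dist c (step c r) = 1 := SimpleGraph.dist_eq_one_iff_adj.mpr hadj
          have htri1 : T.dist x (step c r) ≤ T.dist x c + T.dist c (step c r) :=
            hconn.dist_triangle
          have htri2 : T.dist x r ≤ T.dist x (step c r) + T.dist (step c r) r :=
            hconn.dist_triangle
          have hxc' : T.dist x (step c r) = k + 1 := by omega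
          have hplay2 : (PeriodicGraph.play σ ρ (t0 + (k + 1))).2 =
              ρ.move (t0 + k) ((PeriodicGraph.play σ ρ (t0 + (k + 1))).1) r := rfl
          set r' := (PeriodicGraph.play σ ρ (t0 + (k + 1))).2 with hr'def
          have hrleg : r' = r ∨ T.Adj r r' := by
            have h := hρ (t0 + k) ((PeriodicGraph.play σ ρ (t0 + (k + 1))).1) r
            rw [hsnapT _ hcond.1 hcond.2] at h
            rw [hplay2]
            exact Set.mem_insert_iff.mp h
          simp only [hmove]
          refine ⟨hxc', ?_⟩
          rcases hrleg with h | h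
          · rw [h]; omega
          · rcases tree_adj_dist hT h x with hx' | hx'
            · have htri3 : T.dist x r' ≤ T.dist x (step c r) + T.dist (step c r) r' :=
                hconn.dist_triangle
              rcases tree_adj_dist hT h (step c r) with hc2 | hc2 <;> omega
            · exact tree_step_toward hT h hx' hc'ne (by omega)
      obtain ⟨h1, h2⟩ := key ℓ le_rfl
      have h3 : T.dist x ((PeriodicGraph.play σ ρ (t0 + ℓ)).2) ≤ ℓ := hx _
      have h4 : T.dist ((PeriodicGraph.play σ ρ (t0 + ℓ)).1 0)
          ((PeriodicGraph.play σ ρ (t0 + ℓ)).2) = 0 := by omega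
      exact (hcap (t0 + ℓ) 0).1 (hconn.dist_eq_zero_iff.mp h4)
  have h0 : ¬ 𝒢.CopsWin 0 := by
    rintro ⟨σ0, hleg0, hwin0⟩
    obtain ⟨t, i, -⟩ := hwin0 ⟨fun _ => Classical.arbitrary V, fun _ _ r => r⟩
      (fun t c r => Set.mem_insert _ _)
    exact i.elim0
  have hmem : 1 ∈ {k | 𝒢.CopsWin k} := hwin1
  have hle : sInf {k | 𝒢.CopsWin k} ≤ 1 := Nat.sInf_le hmem
  have hmem' := Nat.sInf_mem (⟨1, hmem⟩ : {k | 𝒢.CopsWin k}.Nonempty)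
  have hne : sInf {k | 𝒢.CopsWin k} ≠ 0 := fun h => h0 (h ▸ hmem')
  show sInf {k | 𝒢.CopsWin k} = 1
  omega
end
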